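/- arXiv:1607.04143 — 7 statements merged into one kernel-verified Lean document; each statement's English description precedes it below -/
import Mathlib

section
/- Let Δ ≥ Δ_min,A := Σ_{x_A} P_{X_A}(x_A) · min_{y ∈ 𝒴} d_A(x_A, y). Then the minimum of I_Q(X_A ∧ Y) over all feasible joint pmfs Q on 𝒳_A × 𝒳_{A^c} × 𝒴 with E_Q[d] ≤ Δ equals the minimum of I_{Q'}(X_A ∧ Y) over all joint pmfs Q' on 𝒳_A × 𝒴 whose 𝒳_A-marginal equals P_{X_A} and which satisfy Σ_{x_A, y} Q'(x_A, y) d_A(x_A, y) ≤ Δ. In other words, the fixed-set sampling rate distortion function is the ordinary rate distortion function of the source P_{X_A} under the modified distortion measure d_A. -/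
noncomputable section

/-- A probability mass function on a finite type. -/
def IsPMF {T : Type*} [Fintype T] (p : T → ℝ) : Prop :=
  (∀ t, 0 ≤ p t) ∧ ∑ t, p t = 1

/-- Mutual information of a joint pmf `Q` on a product of two finite types;
terms with `Q p = 0` vanish since `0 * log _ = 0`. -/
def mutInfo {α β : Type*} [Fintype α] [Fintype β] (Q : α × β → ℝ) : ℝ :=
  ∑ p : α × β, Q p * Real.log (Q p / ((∑ b, Q (p.1, b)) * (∑ a, Q (a, p.2))))

variable {XA XAc Y : Type*} [Fintype XA] [Fintype XAc] [Fintype Y]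

/-- The `𝒳_A`-marginal of `P`. -/
def margXA (P : XA × XAc → ℝ) (xa : XA) : ℝ := ∑ x', P (xa, x')

/-- Conditional pmf `P_{X_{A^c}|X_A}(x'|xa)`. -/
def condP (P : XA × XAc → ℝ) (x' : XAc) (xa : XA) : ℝ := P (xa, x') / margXA P xa

/-- The modified distortion measure `d_A`. -/
def dA (P : XA × XAc → ℝ) (d : XA × XAc → Y → ℝ) (xa : XA) (y : Y) : ℝ :=
  ∑ x', condP P x' xa * d (xa, x') y

/-- Feasible joint pmfs: a pmf whose `(𝒳_A × 𝒳_{A^c})`-marginal equals `P` and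
satisfying the Markov chain `X_{A^c} — X_A — Y`, i.e.
`Q(x_A,x_{A^c},y) ⬝ Q_{X_A}(x_A) = P(x_A,x_{A^c}) ⬝ Q_{X_A Y}(x_A,y)`. -/
def Feasible (P : XA × XAc → ℝ) (Q : (XA × XAc) × Y → ℝ) : Prop :=
  IsPMF Q ∧ (∀ x, ∑ y, Q (x, y) = P x) ∧
    ∀ xa x' y, Q ((xa, x'), y) * (∑ x'', ∑ y', Q ((xa, x''), y')) =
      P (xa, x') * (∑ x'', Q ((xa, x''), y))

/-- Expected distortion of `Q`. -/
def expDist (d : XA × XAc → Y → ℝ) (Q : (XA × XAc) × Y → ℝ) : ℝ :=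
  ∑ p : (XA × XAc) × Y, Q p * d p.1 p.2

/-- Marginal of `Q` on `(X_A, Y)`. -/
def margAY (Q : (XA × XAc) × Y → ℝ) : XA × Y → ℝ :=
  fun p => ∑ x', Q ((p.1, x'), p.2)

/-- the fixed-set sampling rate distortion function equals the ordinary
rate distortion function of the source `P_{X_A}` under the modified distortion `d_A`. -/
theorem stmt0 [Nonempty Y]
    (P : XA × XAc → ℝ) (hP : IsPMF P) (hfull : ∀ x, 0 < P x)
    (d : XA × XAc → Y → ℝ) (hd : ∀ x y, 0 ≤ d x y) (Δ : ℝ)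
    (hΔ : (∑ xa, margXA P xa *
        Finset.univ.inf' Finset.univ_nonempty (fun y => dA P d xa y)) ≤ Δ) :
    sInf {r | ∃ Q : (XA × XAc) × Y → ℝ,
        Feasible P Q ∧ expDist d Q ≤ Δ ∧ mutInfo (margAY Q) = r} =
    sInf {r | ∃ Q' : XA × Y → ℝ, IsPMF Q' ∧
        (∀ xa, ∑ y, Q' (xa, y) = margXA P xa) ∧
        (∑ p : XA × Y, Q' p * dA P d p.1 p.2) ≤ Δ ∧ mutInfo Q' = r} := by
  classical
  obtain ⟨hP0, hP1⟩ := hP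
  have hneXc : Nonempty XAc := by
    by_contra h
    rw [not_nonempty_iff] at h
    rw [Fintype.sum_prod_type] at hP1
    simp at hP1
  have hm : ∀ xa, 0 < margXA P xa := fun xa =>
    Finset.sum_pos (fun x' _ => hfull _) Finset.univ_nonempty
  have hcond1 : ∀ xa, (∑ x', condP P x' xa) = 1 := by
    intro xa
    unfold condP
    rw [← Finset.sum_div]
    exact div_self (hm xa).ne'
  congr 1
  ext r
  simp only [Set.mem_setOf_eq]
  constructor
  · rintro ⟨Q, ⟨⟨hQ0, hQ1⟩, hmarg, hmk⟩, hdist, hmi⟩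
    have hsumxa : ∀ xa, (∑ x'', ∑ y', Q ((xa, x''), y')) = margXA P xa := by
      intro xa
      unfold margXA
      exact Finset.sum_congr rfl fun x _ => hmarg _
    have hfact : ∀ xa x' y, Q ((xa, x'), y) = condP P x' xa * margAY Q (xa, y) := by
      intro xa x' y
      have h := hmk xa x' y
      rw [hsumxa] at h
      show Q ((xa, x'), y) = P (xa, x') / margXA P xa * ∑ x'', Q ((xa, x''), y)
      rw [div_mul_eq_mul_div, eq_div_iff (hm xa).ne']
      exact h
    refine ⟨margAY Q, ⟨fun p => Finset.sum_nonneg fun _ _ => hQ0 _, ?_⟩, ?_, ?_, hmi⟩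
    · rw [← hQ1]
      simp only [Fintype.sum_prod_type, margAY]
      exact Finset.sum_congr rfl fun xa _ => Finset.sum_comm
    · intro xa
      show (∑ y, ∑ x', Q ((xa, x'), y)) = margXA P xa
      rw [Finset.sum_comm]
      exact hsumxa xa
    · have : expDist d Q = ∑ p : XA × Y, margAY Q p * dA P d p.1 p.2 := by
        unfold expDist dA
        simp only [Fintype.sum_prod_type]
        refine Finset.sum_congr rfl fun xa _ => ?_
        rw [Finset.sum_comm]
        refine Finset.sum_congr rfl fun y _ => ?_
        rw [Finset.mul_sum]
        refine Finset.sum_congr rfl fun x' _ => ?_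
        rw [hfact xa x' y]
        ring
      linarith [hdist, this.symm.le]
  · rintro ⟨Q', ⟨hQ0, hQ1⟩, hmarg, hdist, hmi⟩
    set Q : (XA × XAc) × Y → ℝ := fun p => condP P p.1.2 p.1.1 * Q' (p.1.1, p.2) with hQdef
    have hcnn : ∀ x' xa, 0 ≤ condP P x' xa := fun x' xa =>
      div_nonneg (hP0 _) (hm xa).le
    have hAY : margAY Q = Q' := by
      funext p
      show (∑ x', condP P x' p.1 * Q' (p.1, p.2)) = Q' p
      rw [← Finset.sum_mul, hcond1, one_mul]
    have hsumxa : ∀ xa, (∑ x'', ∑ y', Q ((xa, x''), y')) = margXA P xa := by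
      intro xa
      have : ∀ x'', (∑ y', Q ((xa, x''), y')) = P (xa, x'') := by
        intro x''
        show (∑ y', condP P x'' xa * Q' (xa, y')) = P (xa, x'')
        rw [← Finset.mul_sum, hmarg, condP, div_mul_cancel₀ _ (hm xa).ne']
      rw [Finset.sum_congr rfl fun x _ => this x]
      rfl
    refine ⟨Q, ⟨⟨fun p => mul_nonneg (hcnn _ _) (hQ0 _), ?_⟩, ?_, ?_⟩, ?_, by rwa [hAY]⟩
    · rw [← hQ1]
      simp only [Fintype.sum_prod_type, hQdef]
      refine Finset.sum_congr rfl fun xa _ => ?_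
      rw [Finset.sum_comm]
      refine Finset.sum_congr rfl fun y _ => ?_
      rw [← Finset.sum_mul, hcond1, one_mul]
    · intro x
      show (∑ y, condP P x.2 x.1 * Q' (x.1, y)) = P x
      rw [← Finset.mul_sum, hmarg, condP, div_mul_cancel₀ _ (hm x.1).ne']
    · intro xa x' y
      rw [hsumxa]
      have h2 : (∑ x'', Q ((xa, x''), y)) = Q' (xa, y) := by
        show (∑ x'', condP P x'' xa * Q' (xa, y)) = Q' (xa, y)
        rw [← Finset.sum_mul, hcond1, one_mul]
      rw [h2]
      show condP P x' xa * Q' (xa, y) * margXA P xa = P (xa, x') * Q' (xa, y)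
      rw [condP, div_mul_eq_mul_div, div_mul_cancel₀ _ (hm xa).ne']
    · have : expDist d Q = ∑ p : XA × Y, Q' p * dA P d p.1 p.2 := by
        unfold expDist dA
        simp only [Fintype.sum_prod_type, hQdef]
        refine Finset.sum_congr rfl fun xa _ => ?_
        rw [Finset.sum_comm]
        refine Finset.sum_congr rfl fun y _ => ?_
        rw [Finset.mul_sum]
        refine Finset.sum_congr rfl fun x' _ => ?_
        ring
      linarith [hdist, this.le]
end
end

section
/- For every Δ with Δ_min ≤ Δ ≤ Δ_max, R_A(Δ) equals the minimum of I_{Q_A}(X_A ∧ Y_A) over all joint pmfs Q_A on 𝒳_A × 𝒳_A whose first marginal equals P_{X_A} and which satisfy Σ_{x_A, y_A} Q_A(x_A, y_A) α(x_A) 1(x_A ≠ y_A) ≤ Δ − (1 − Σ_{x_A} P_{X_A}(x_A) α(x_A)). -/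
noncomputable section

variable {XA XAc Y : Type*} [Fintype XA] [Fintype XAc] [Fintype Y]

variable [DecidableEq XA] [DecidableEq XAc]

/-- The probability-of-error distortion measure on `𝒴 = 𝒳_A × 𝒳_{A^c}`. -/
def dErr : XA × XAc → XA × XAc → ℝ := fun x y => if x = y then 0 else 1

/-- `α(x_A) = max_{x' ∈ 𝒳_{A^c}} P_{X_{A^c}|X_A}(x'|x_A)`. -/
def alphaF [Nonempty XAc] (P : XA × XAc → ℝ) (xa : XA) : ℝ :=
  Finset.univ.sup' Finset.univ_nonempty (fun x' => condP P x' xa)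

/-- The fixed-set sampling rate distortion function `R_A(Δ)` for the
probability-of-error distortion. -/
def RAerr (P : XA × XAc → ℝ) (Δ : ℝ) : ℝ :=
  sInf {r | ∃ Q : (XA × XAc) × (XA × XAc) → ℝ,
    Feasible P Q ∧ expDist dErr Q ≤ Δ ∧ mutInfo (margAY Q) = r}


section AuxLemmas

lemma gibbs {ι : Type*} [Fintype ι] (f g : ι → ℝ)
    (hf : ∀ i, 0 ≤ f i) (hg : ∀ i, 0 ≤ g i)
    (hfg : ∀ i, g i = 0 → f i = 0)
    (hf1 : ∑ i, f i = 1) (hg1 : ∑ i, g i ≤ 1) :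
    0 ≤ ∑ i, f i * Real.log (f i / g i) := by
  have key : ∀ i, f i - g i ≤ f i * Real.log (f i / g i) := by
    intro i
    rcases eq_or_lt_of_le (hf i) with h0 | h0
    · rw [← h0]; simpa using hg i
    · have hgi : 0 < g i := by
        rcases eq_or_lt_of_le (hg i) with h1 | h1
        · exfalso; have := hfg i h1.symm; linarith
        · exact h1
      have hpos : 0 < g i / f i := div_pos hgi h0
      have hlog := Real.log_le_sub_one_of_pos hpos
      have hL : Real.log (f i / g i) = - Real.log (g i / f i) := by
        rw [← Real.log_inv, inv_div]
      have hcan : f i * (g i / f i) = g i := mul_div_cancel₀ _ (ne_of_gt h0)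
      rw [hL]
      nlinarith [mul_le_mul_of_nonneg_left hlog h0.le]
  have h2 : ∑ i, (f i - g i) ≤ ∑ i, f i * Real.log (f i / g i) :=
    Finset.sum_le_sum fun i _ => key i
  rw [Finset.sum_sub_distrib, hf1] at h2
  linarith

lemma mutInfo_nonneg {α β : Type*} [Fintype α] [Fintype β] {Q : α × β → ℝ}
    (hQ : IsPMF Q) : 0 ≤ mutInfo Q := by
  obtain ⟨hQ0, hQ1⟩ := hQ
  have h1 : ∀ a, (0:ℝ) ≤ ∑ b, Q (a, b) := fun a => Finset.sum_nonneg fun b _ => hQ0 _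
  have h2 : ∀ b, (0:ℝ) ≤ ∑ a, Q (a, b) := fun b => Finset.sum_nonneg fun a _ => hQ0 _
  have e1 : ∑ a, ∑ b, Q (a, b) = 1 := by rw [← Fintype.sum_prod_type]; exact hQ1
  have e2 : ∑ b, ∑ a, Q (a, b) = 1 := by rw [Finset.sum_comm]; exact e1
  refine gibbs Q (fun p => (∑ b, Q (p.1, b)) * (∑ a, Q (a, p.2))) hQ0
    (fun p => mul_nonneg (h1 _) (h2 _)) ?_ hQ1 ?_
  · intro p hp
    rcases mul_eq_zero.1 hp with h | h
    · have hle : Q (p.1, p.2) ≤ ∑ b, Q (p.1, b) :=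
        Finset.single_le_sum (f := fun b => Q (p.1, b)) (fun b _ => hQ0 _) (Finset.mem_univ p.2)
      have := hQ0 p
      rw [h] at hle
      simp only [Prod.mk.eta] at hle
      linarith
    · have hle : Q (p.1, p.2) ≤ ∑ a, Q (a, p.2) :=
        Finset.single_le_sum (f := fun a => Q (a, p.2)) (fun a _ => hQ0 _) (Finset.mem_univ p.1)
      have := hQ0 p
      rw [h] at hle
      simp only [Prod.mk.eta] at hle
      linarith
  · calc ∑ p : α × β, (∑ b, Q (p.1, b)) * (∑ a, Q (a, p.2))
        = ∑ a, ∑ b, (∑ b', Q (a, b')) * (∑ a', Q (a', b)) := Fintype.sum_prod_type _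
      _ = (∑ a, ∑ b', Q (a, b')) * (∑ b, ∑ a', Q (a', b)) := (Finset.sum_mul_sum _ _ _ _).symm
      _ ≤ 1 := by rw [e1, e2]; norm_num

lemma dataProc {α β γ : Type*} [Fintype α] [Fintype β] [Fintype γ]
    {R : α × (β × γ) → ℝ} (hR : IsPMF R) :
    mutInfo (fun q : α × β => ∑ c, R (q.1, (q.2, c))) ≤ mutInfo R := by
  obtain ⟨hR0, hR1⟩ := hR
  set QA : α × β → ℝ := fun q => ∑ c, R (q.1, (q.2, c)) with hQAdef
  set R1 : α → ℝ := fun a => ∑ bc, R (a, bc) with hR1def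
  set R2 : β × γ → ℝ := fun bc => ∑ a, R (a, bc) with hR2def
  set QA2 : β → ℝ := fun b => ∑ a, QA (a, b) with hQA2def
  have hQA0 : ∀ q, 0 ≤ QA q := fun q => Finset.sum_nonneg fun _ _ => hR0 _
  have hR20 : ∀ bc, 0 ≤ R2 bc := fun bc => Finset.sum_nonneg fun _ _ => hR0 _
  have hQA20 : ∀ b, 0 ≤ QA2 b := fun b => Finset.sum_nonneg fun _ _ => hQA0 _
  have hQA1fst : ∀ a, ∑ b, QA (a, b) = R1 a := by
    intro a
    show ∑ b, ∑ c, R (a, (b, c)) = ∑ bc, R (a, bc)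
    rw [Fintype.sum_prod_type]
  have hposall : ∀ p : α × (β × γ), 0 < R p →
      0 < QA (p.1, p.2.1) ∧ 0 < R1 p.1 ∧ 0 < R2 p.2 ∧ 0 < QA2 p.2.1 := by
    intro p hp
    have hqa : 0 < QA (p.1, p.2.1) := by
      refine lt_of_lt_of_le hp ?_
      have := Finset.single_le_sum (f := fun c => R (p.1, (p.2.1, c)))
        (fun c _ => hR0 _) (Finset.mem_univ p.2.2)
      simpa using this
    refine ⟨hqa, ?_, ?_, ?_⟩
    · refine lt_of_lt_of_le hp ?_
      have := Finset.single_le_sum (f := fun bc => R (p.1, bc))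
        (fun bc _ => hR0 _) (Finset.mem_univ p.2)
      simpa using this
    · refine lt_of_lt_of_le hp ?_
      have := Finset.single_le_sum (f := fun a => R (a, p.2))
        (fun a _ => hR0 _) (Finset.mem_univ p.1)
      simpa using this
    · refine lt_of_lt_of_le hqa ?_
      exact Finset.single_le_sum (f := fun a => QA (a, p.2.1))
        (fun a _ => hQA0 _) (Finset.mem_univ p.1)
  have hMIQA : mutInfo QA
      = ∑ p : α × (β × γ), R p * Real.log (QA (p.1, p.2.1) / (R1 p.1 * QA2 p.2.1)) := by
    rw [mutInfo, Fintype.sum_prod_type, Fintype.sum_prod_type]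
    refine Finset.sum_congr rfl fun a _ => ?_
    rw [Fintype.sum_prod_type]
    refine Finset.sum_congr rfl fun b _ => ?_
    have : ∑ c, R (a, (b, c)) * Real.log (QA (a, b) / (R1 a * QA2 b))
        = QA (a, b) * Real.log (QA (a, b) / (R1 a * QA2 b)) := by
      rw [← Finset.sum_mul]
    rw [this, hQA1fst a]
  have hMIR : mutInfo R
      = ∑ p : α × (β × γ), R p * Real.log (R p / (R1 p.1 * R2 p.2)) := rfl
  have hdiff : mutInfo R - mutInfo QA
      = ∑ p : α × (β × γ), R p * Real.log (R p / (QA (p.1, p.2.1) * R2 p.2 / QA2 p.2.1)) := by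
    rw [hMIR, hMIQA, ← Finset.sum_sub_distrib]
    refine Finset.sum_congr rfl fun p _ => ?_
    rcases eq_or_lt_of_le (hR0 p) with h0 | h0
    · rw [← h0]; ring
    · obtain ⟨hqa, hr1, hr2, hqa2⟩ := hposall p h0
      rw [Real.log_div (ne_of_gt h0) (mul_pos hr1 hr2).ne',
          Real.log_div (ne_of_gt hqa) (mul_pos hr1 hqa2).ne',
          Real.log_div (ne_of_gt h0) (div_pos (mul_pos hqa hr2) hqa2).ne',
          Real.log_div (mul_pos hqa hr2).ne' hqa2.ne',
          Real.log_mul hqa.ne' hr2.ne',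
          Real.log_mul hr1.ne' hr2.ne',
          Real.log_mul hr1.ne' hqa2.ne']
      ring
  have hQA2sum : ∑ b, QA2 b = 1 := by
    show ∑ b, ∑ a, QA (a, b) = 1
    rw [Finset.sum_comm]
    calc ∑ a, ∑ b, QA (a, b) = ∑ a, R1 a := Finset.sum_congr rfl fun a _ => hQA1fst a
      _ = 1 := by rw [hR1def, ← Fintype.sum_prod_type]; exact hR1
  have hb : ∀ b, ∑ a, ∑ c, QA (a, b) * R2 (b, c) / QA2 b ≤ QA2 b := by
    intro b
    have hTc : ∑ c, R2 (b, c) = QA2 b := by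
      show ∑ c, ∑ a, R (a, (b, c)) = ∑ a, QA (a, b)
      rw [Finset.sum_comm]
    have key : ∑ a, ∑ c, QA (a, b) * R2 (b, c) / QA2 b = QA2 b * (QA2 b / QA2 b) := by
      simp only [mul_div_assoc]
      calc ∑ a, ∑ c, QA (a, b) * (R2 (b, c) / QA2 b)
          = ∑ a, QA (a, b) * ∑ c, R2 (b, c) / QA2 b :=
            Finset.sum_congr rfl fun a _ => (Finset.mul_sum _ _ _).symm
        _ = (∑ a, QA (a, b)) * ∑ c, R2 (b, c) / QA2 b := by rw [Finset.sum_mul]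
        _ = QA2 b * ((∑ c, R2 (b, c)) / QA2 b) := by rw [Finset.sum_div]
        _ = QA2 b * (QA2 b / QA2 b) := by rw [hTc]
    rw [key]
    rcases eq_or_ne (QA2 b) 0 with h | h
    · simp [h]
    · rw [div_self h, mul_one]
  have hgsum : ∑ p : α × (β × γ), QA (p.1, p.2.1) * R2 p.2 / QA2 p.2.1 ≤ 1 := by
    calc ∑ p : α × (β × γ), QA (p.1, p.2.1) * R2 p.2 / QA2 p.2.1
        = ∑ a, ∑ b, ∑ c, QA (a, b) * R2 (b, c) / QA2 b := by
          rw [Fintype.sum_prod_type]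
          exact Finset.sum_congr rfl fun a _ => Fintype.sum_prod_type _
      _ = ∑ b, ∑ a, ∑ c, QA (a, b) * R2 (b, c) / QA2 b := Finset.sum_comm
      _ ≤ ∑ b, QA2 b := Finset.sum_le_sum fun b _ => hb b
      _ = 1 := hQA2sum
  have h0le := gibbs R (fun p => QA (p.1, p.2.1) * R2 p.2 / QA2 p.2.1) hR0
    (fun p => div_nonneg (mul_nonneg (hQA0 _) (hR20 _)) (hQA20 _))
    (fun p hp => by
      by_contra h
      have h0 : 0 < R p := (hR0 p).lt_of_ne (Ne.symm h)
      obtain ⟨hqa, hr1, hr2, hqa2⟩ := hposall p h0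
      have : 0 < QA (p.1, p.2.1) * R2 p.2 / QA2 p.2.1 := div_pos (mul_pos hqa hr2) hqa2
      linarith) hR1 hgsum
  rw [← hdiff] at h0le
  linarith

lemma mutInfo_detExt {α β γ : Type*} [Fintype α] [Fintype β] [Fintype γ] [DecidableEq γ]
    (QA : α × β → ℝ) (g : β → γ) :
    mutInfo (fun p : α × (β × γ) => QA (p.1, p.2.1) * (if p.2.2 = g p.2.1 then 1 else 0))
      = mutInfo QA := by
  have hind : ∀ b, ∑ c, (if c = g b then (1:ℝ) else 0) = 1 := by
    intro b; rw [Finset.sum_ite_eq']; simp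
  have hm1 : ∀ a, (∑ y : β × γ, QA (a, y.1) * (if y.2 = g y.1 then (1:ℝ) else 0))
      = ∑ b, QA (a, b) := by
    intro a
    rw [Fintype.sum_prod_type]
    refine Finset.sum_congr rfl fun b _ => ?_
    simp only []
    rw [← Finset.mul_sum, hind, mul_one]
  rw [mutInfo, mutInfo, Fintype.sum_prod_type, Fintype.sum_prod_type]
  refine Finset.sum_congr rfl fun a _ => ?_
  rw [Fintype.sum_prod_type]
  refine Finset.sum_congr rfl fun b _ => ?_
  simp only []
  rw [Fintype.sum_eq_single (g b) (fun c hc => by simp [hc])]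
  simp only [if_pos rfl, mul_one]
  rw [hm1]
  simp

end AuxLemmas

section MainLemmas

lemma expDist_dErr (Q : (XA × XAc) × (XA × XAc) → ℝ) (h1 : ∑ p, Q p = 1) :
    expDist dErr Q = 1 - ∑ x : XA × XAc, Q (x, x) := by
  rw [expDist]
  have h : ∀ p : (XA × XAc) × (XA × XAc), Q p * dErr p.1 p.2
      = Q p - (if p.1 = p.2 then Q p else 0) := by
    intro p
    simp only [dErr]
    by_cases h : p.1 = p.2 <;> simp [h]
  rw [Finset.sum_congr rfl fun p _ => h p, Finset.sum_sub_distrib, h1]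
  congr 1
  rw [Fintype.sum_prod_type]
  refine Finset.sum_congr rfl fun x _ => ?_
  simp only []
  rw [Finset.sum_ite_eq]
  simp

lemma dist_accounting [Nonempty XAc] (P : XA × XAc → ℝ)
    (QA : XA × XA → ℝ) (hmarg : ∀ xa, ∑ ya, QA (xa, ya) = margXA P xa) :
    (∑ p : XA × XA, QA p * (alphaF P p.1 * (if p.1 = p.2 then 0 else 1)))
      = (∑ xa, margXA P xa * alphaF P xa) - ∑ xa, QA (xa, xa) * alphaF P xa := by
  have h : ∀ p : XA × XA, QA p * (alphaF P p.1 * (if p.1 = p.2 then 0 else 1))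
      = QA p * alphaF P p.1 - (if p.1 = p.2 then QA p * alphaF P p.1 else 0) := by
    intro p; by_cases h : p.1 = p.2 <;> simp [h]
  rw [Finset.sum_congr rfl fun p _ => h p, Finset.sum_sub_distrib]
  congr 1
  · rw [Fintype.sum_prod_type]
    refine Finset.sum_congr rfl fun xa _ => ?_
    simp only []
    rw [← Finset.sum_mul, hmarg xa]
  · rw [Fintype.sum_prod_type]
    refine Finset.sum_congr rfl fun xa _ => ?_
    simp only []
    rw [Finset.sum_ite_eq]
    simp

lemma margAY_pmf (P : XA × XAc → ℝ) (hP1 : ∑ x, P x = 1)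
    (Q : (XA × XAc) × Y → ℝ) (h : Feasible P Q) : IsPMF (margAY Q) := by
  refine ⟨fun p => Finset.sum_nonneg fun x' _ => h.1.1 _, ?_⟩
  calc ∑ p : XA × Y, margAY Q p
      = ∑ xa, ∑ y, ∑ x', Q ((xa, x'), y) := by rw [Fintype.sum_prod_type]; rfl
    _ = ∑ xa, ∑ x', ∑ y, Q ((xa, x'), y) := Finset.sum_congr rfl fun xa _ => Finset.sum_comm
    _ = ∑ xa, ∑ x', P (xa, x') := Finset.sum_congr rfl fun xa _ =>
        Finset.sum_congr rfl fun x' _ => h.2.1 (xa, x')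
    _ = 1 := by rw [← Fintype.sum_prod_type]; exact hP1

lemma forward_aux [Nonempty XA] [Nonempty XAc]
    (P : XA × XAc → ℝ) (hfull : ∀ x, 0 < P x) (hP1 : ∑ x, P x = 1)
    (QA : XA × XA → ℝ) (hQA0 : ∀ q, 0 ≤ QA q)
    (hmarg : ∀ xa, ∑ ya, QA (xa, ya) = margXA P xa) :
    ∃ Q : (XA × XAc) × (XA × XAc) → ℝ,
      Feasible P Q ∧
      expDist dErr Q = 1 - ∑ xa, QA (xa, xa) * alphaF P xa ∧
      mutInfo (margAY Q) = mutInfo QA := by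
  classical
  have hm : ∀ xa, 0 < margXA P xa :=
    fun xa => Finset.sum_pos (fun x' _ => hfull _) Finset.univ_nonempty
  have hc0 : ∀ x' xa, 0 ≤ condP P x' xa := fun x' xa => div_nonneg (hfull _).le (hm _).le
  have hc1 : ∀ xa, ∑ x', condP P x' xa = 1 := by
    intro xa
    simp only [condP]
    rw [← Finset.sum_div]
    show margXA P xa / margXA P xa = 1
    exact div_self (hm xa).ne'
  have hgex : ∀ y, ∃ x', alphaF P y = condP P x' y := fun y => by
    obtain ⟨i, _, hi⟩ := Finset.exists_mem_eq_sup' Finset.univ_nonempty (fun x' => condP P x' y)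
    exact ⟨i, hi⟩
  choose gf hgf using hgex
  have hind : ∀ b, ∑ c, (if c = gf b then (1:ℝ) else 0) = 1 := by
    intro b; rw [Finset.sum_ite_eq']; simp
  set Q : (XA × XAc) × (XA × XAc) → ℝ :=
    fun z => QA (z.1.1, z.2.1) * condP P z.1.2 z.1.1 * (if z.2.2 = gf z.2.1 then 1 else 0)
    with hQdef
  have hQ0 : ∀ z, 0 ≤ Q z := by
    intro z
    refine mul_nonneg (mul_nonneg (hQA0 _) (hc0 _ _)) ?_
    split <;> norm_num
  have hQm : ∀ x : XA × XAc, ∑ y, Q (x, y) = P x := by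
    intro x
    show ∑ y : XA × XAc, QA (x.1, y.1) * condP P x.2 x.1 * (if y.2 = gf y.1 then (1:ℝ) else 0)
        = P x
    rw [Fintype.sum_prod_type]
    have h1 : ∀ ya, ∑ y', QA (x.1, ya) * condP P x.2 x.1 * (if y' = gf ya then (1:ℝ) else 0)
        = QA (x.1, ya) * condP P x.2 x.1 := by
      intro ya
      rw [← Finset.mul_sum, hind, mul_one]
    rw [Finset.sum_congr rfl fun ya _ => h1 ya, ← Finset.sum_mul, hmarg x.1]
    simp only [condP]
    rw [mul_comm, div_mul_cancel₀ _ (hm x.1).ne']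
  have hQ1 : ∑ p, Q p = 1 := by
    rw [Fintype.sum_prod_type, Finset.sum_congr rfl fun x _ => hQm x]
    exact hP1
  have hinner : ∀ xa (y : XA × XAc), ∑ x'', Q ((xa, x''), y)
      = QA (xa, y.1) * (if y.2 = gf y.1 then (1:ℝ) else 0) := by
    intro xa y
    show ∑ x'', QA (xa, y.1) * condP P x'' xa * (if y.2 = gf y.1 then (1:ℝ) else 0) = _
    rw [Finset.sum_congr rfl fun x'' _ => (by ring :
        QA (xa, y.1) * condP P x'' xa * (if y.2 = gf y.1 then (1:ℝ) else 0)
        = QA (xa, y.1) * (if y.2 = gf y.1 then (1:ℝ) else 0) * condP P x'' xa),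
      ← Finset.mul_sum, hc1, mul_one]
  have hfeas : Feasible P Q := by
    refine ⟨⟨hQ0, hQ1⟩, hQm, ?_⟩
    intro xa x' y
    have hsum2 : ∑ x'', ∑ y', Q ((xa, x''), y') = margXA P xa := by
      rw [Finset.sum_congr rfl fun x'' _ => hQm (xa, x'')]
      rfl
    rw [hsum2, hinner xa y]
    show QA (xa, y.1) * condP P x' xa * (if y.2 = gf y.1 then (1:ℝ) else 0) * margXA P xa
        = P (xa, x') * (QA (xa, y.1) * (if y.2 = gf y.1 then (1:ℝ) else 0))
    have key : condP P x' xa * margXA P xa = P (xa, x') := by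
      simp only [condP]
      exact div_mul_cancel₀ _ (hm xa).ne'
    calc QA (xa, y.1) * condP P x' xa * (if y.2 = gf y.1 then (1:ℝ) else 0) * margXA P xa
        = (condP P x' xa * margXA P xa) *
            (QA (xa, y.1) * (if y.2 = gf y.1 then (1:ℝ) else 0)) := by ring
      _ = P (xa, x') * (QA (xa, y.1) * (if y.2 = gf y.1 then (1:ℝ) else 0)) := by rw [key]
  have hdiag : ∑ x : XA × XAc, Q (x, x) = ∑ xa, QA (xa, xa) * alphaF P xa := by
    rw [Fintype.sum_prod_type]
    refine Finset.sum_congr rfl fun xa _ => ?_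
    show ∑ x', QA (xa, xa) * condP P x' xa * (if x' = gf xa then (1:ℝ) else 0)
        = QA (xa, xa) * alphaF P xa
    rw [Fintype.sum_eq_single (gf xa) (fun x' hx' => by simp [hx'])]
    simp [hgf xa]
  refine ⟨Q, hfeas, ?_, ?_⟩
  · rw [expDist_dErr Q hQ1, hdiag]
  · have hmAY : margAY Q = fun p : XA × (XA × XAc) =>
        QA (p.1, p.2.1) * (if p.2.2 = gf p.2.1 then (1:ℝ) else 0) := by
      funext p
      show ∑ x', Q ((p.1, x'), p.2) = _
      exact hinner p.1 p.2
    rw [hmAY]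
    exact mutInfo_detExt QA gf

lemma backward_aux [Nonempty XA] [Nonempty XAc]
    (P : XA × XAc → ℝ) (hfull : ∀ x, 0 < P x) (hP1 : ∑ x, P x = 1)
    (Q : (XA × XAc) × (XA × XAc) → ℝ) (hfeas : Feasible P Q) :
    ∃ QA : XA × XA → ℝ, IsPMF QA ∧ (∀ xa, ∑ ya, QA (xa, ya) = margXA P xa) ∧
      1 - ∑ xa, QA (xa, xa) * alphaF P xa ≤ expDist dErr Q ∧
      mutInfo QA ≤ mutInfo (margAY Q) := by
  have hRpmf : IsPMF (margAY Q) := margAY_pmf P hP1 Q hfeas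
  obtain ⟨⟨hQ0, hQ1⟩, hQm, hMarkov⟩ := hfeas
  have hm : ∀ xa, 0 < margXA P xa :=
    fun xa => Finset.sum_pos (fun x' _ => hfull _) Finset.univ_nonempty
  have hR0 : ∀ p, 0 ≤ margAY Q p := fun p => Finset.sum_nonneg fun _ _ => hQ0 _
  set QA : XA × XA → ℝ := fun q => ∑ y', margAY Q (q.1, (q.2, y')) with hQAdef
  have hQA0 : ∀ q, 0 ≤ QA q := fun q => Finset.sum_nonneg fun _ _ => hR0 _
  have hQAm : ∀ xa, ∑ ya, QA (xa, ya) = margXA P xa := by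
    intro xa
    show ∑ ya, ∑ y', margAY Q (xa, (ya, y')) = margXA P xa
    calc ∑ ya, ∑ y', margAY Q (xa, (ya, y'))
        = ∑ y : XA × XAc, margAY Q (xa, y) :=
          (Fintype.sum_prod_type (fun y : XA × XAc => margAY Q (xa, y))).symm
      _ = ∑ y : XA × XAc, ∑ x', Q ((xa, x'), y) := rfl
      _ = ∑ x', ∑ y, Q ((xa, x'), y) := Finset.sum_comm
      _ = ∑ x', P (xa, x') := Finset.sum_congr rfl fun x' _ => hQm _
      _ = margXA P xa := rfl
  have hQA1 : ∑ q, QA q = 1 := by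
    rw [Fintype.sum_prod_type, Finset.sum_congr rfl fun xa _ => hQAm xa]
    calc ∑ xa, margXA P xa = ∑ xa, ∑ x', P (xa, x') := rfl
      _ = 1 := by rw [← Fintype.sum_prod_type]; exact hP1
  have hQfact : ∀ xa x' (y : XA × XAc), Q ((xa, x'), y) = condP P x' xa * margAY Q (xa, y) := by
    intro xa x' y
    have h2 : ∑ x'', ∑ y', Q ((xa, x''), y') = margXA P xa := by
      rw [Finset.sum_congr rfl fun x'' _ => hQm (xa, x'')]
      rfl
    have hmk := hMarkov xa x' y
    rw [h2] at hmk
    simp only [condP]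
    rw [div_mul_eq_mul_div, eq_div_iff (hm xa).ne']
    calc Q ((xa, x'), y) * margXA P xa = P (xa, x') * ∑ x'', Q ((xa, x''), y) := hmk
      _ = P (xa, x') * margAY Q (xa, y) := rfl
  have hαle : ∀ x' xa, condP P x' xa ≤ alphaF P xa :=
    fun x' xa => Finset.le_sup' (fun x'' => condP P x'' xa) (Finset.mem_univ x')
  have hdiag : ∑ x : XA × XAc, Q (x, x) ≤ ∑ xa, QA (xa, xa) * alphaF P xa := by
    rw [Fintype.sum_prod_type]
    refine Finset.sum_le_sum fun xa _ => ?_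
    calc ∑ x', Q ((xa, x'), (xa, x'))
        = ∑ x', condP P x' xa * margAY Q (xa, (xa, x')) :=
          Finset.sum_congr rfl fun x' _ => hQfact xa x' (xa, x')
      _ ≤ ∑ x', alphaF P xa * margAY Q (xa, (xa, x')) :=
          Finset.sum_le_sum fun x' _ => mul_le_mul_of_nonneg_right (hαle x' xa) (hR0 _)
      _ = QA (xa, xa) * alphaF P xa := by rw [← Finset.mul_sum]; exact mul_comm _ _
  refine ⟨QA, ⟨hQA0, hQA1⟩, hQAm, ?_, dataProc hRpmf⟩
  rw [expDist_dErr Q hQ1]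
  linarith

end MainLemmas

/-- for the probability-of-error distortion, `R_A(Δ)` reduces to a
rate distortion problem for the sampled source alone, with modified distortion
`α(x_A) 1(x_A ≠ y_A)` and reduced threshold. -/
theorem stmt3 [Nonempty XA] [Nonempty XAc]
    (P : XA × XAc → ℝ) (hP : IsPMF P) (hfull : ∀ x, 0 < P x) (Δ : ℝ)
    (hmin : 1 - ∑ xa, margXA P xa * alphaF P xa ≤ Δ)
    (hmax : Δ ≤ 1 - Finset.univ.sup' Finset.univ_nonempty P) :
    RAerr P Δ =
      sInf {r | ∃ QA : XA × XA → ℝ, IsPMF QA ∧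
        (∀ xa, ∑ ya, QA (xa, ya) = margXA P xa) ∧
        (∑ p : XA × XA, QA p * (alphaF P p.1 * (if p.1 = p.2 then 0 else 1))) ≤
          Δ - (1 - ∑ xa, margXA P xa * alphaF P xa) ∧
        mutInfo QA = r} := by
  classical
  obtain ⟨hP0, hP1⟩ := hP
  have hm : ∀ xa, 0 < margXA P xa :=
    fun xa => Finset.sum_pos (fun x' _ => hfull _) Finset.univ_nonempty
  have hmarg1 : ∑ xa, margXA P xa = 1 := by
    calc ∑ xa, margXA P xa = ∑ xa, ∑ x', P (xa, x') := rfl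
      _ = 1 := by rw [← Fintype.sum_prod_type]; exact hP1
  set QA0 : XA × XA → ℝ := fun q => if q.1 = q.2 then margXA P q.1 else 0 with hQA0def
  have hQA0nn : ∀ q, 0 ≤ QA0 q := by
    intro q
    show 0 ≤ if q.1 = q.2 then margXA P q.1 else 0
    split
    · exact (hm _).le
    · exact le_refl 0
  have hQA0m : ∀ xa, ∑ ya, QA0 (xa, ya) = margXA P xa := by
    intro xa
    show ∑ ya, (if xa = ya then margXA P xa else 0) = margXA P xa
    rw [Finset.sum_ite_eq]
    simp
  have hQA0pmf : IsPMF QA0 := ⟨hQA0nn, by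
    rw [Fintype.sum_prod_type, Finset.sum_congr rfl fun xa _ => hQA0m xa]
    exact hmarg1⟩
  have hQA0d : (∑ p : XA × XA, QA0 p * (alphaF P p.1 * (if p.1 = p.2 then 0 else 1)))
      ≤ Δ - (1 - ∑ xa, margXA P xa * alphaF P xa) := by
    have hz : ∀ p : XA × XA, QA0 p * (alphaF P p.1 * (if p.1 = p.2 then 0 else 1)) = 0 := by
      intro p
      show (if p.1 = p.2 then margXA P p.1 else 0) * _ = 0
      by_cases h : p.1 = p.2 <;> simp [h]
    rw [Finset.sum_congr rfl fun p _ => hz p, Finset.sum_const_zero]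
    linarith
  have hfwd : ∀ r : ℝ, (∃ QA : XA × XA → ℝ, IsPMF QA ∧
        (∀ xa, ∑ ya, QA (xa, ya) = margXA P xa) ∧
        (∑ p : XA × XA, QA p * (alphaF P p.1 * (if p.1 = p.2 then 0 else 1))) ≤
          Δ - (1 - ∑ xa, margXA P xa * alphaF P xa) ∧
        mutInfo QA = r) →
      (∃ Q : (XA × XAc) × (XA × XAc) → ℝ,
        Feasible P Q ∧ expDist dErr Q ≤ Δ ∧ mutInfo (margAY Q) = r) := by
    rintro r ⟨QA, hpmf, hmarg, hd, rfl⟩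
    obtain ⟨Q, hfeas, hED, hMI⟩ := forward_aux P hfull hP1 QA hpmf.1 hmarg
    refine ⟨Q, hfeas, ?_, hMI⟩
    rw [hED]
    rw [dist_accounting P QA hmarg] at hd
    linarith
  have hbdd1 : ∀ r ∈ {r : ℝ | ∃ Q : (XA × XAc) × (XA × XAc) → ℝ,
      Feasible P Q ∧ expDist dErr Q ≤ Δ ∧ mutInfo (margAY Q) = r}, (0:ℝ) ≤ r := by
    rintro r ⟨Q, hfeas, _, rfl⟩
    exact mutInfo_nonneg (margAY_pmf P hP1 Q hfeas)
  have hbdd2 : ∀ r ∈ {r : ℝ | ∃ QA : XA × XA → ℝ, IsPMF QA ∧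
      (∀ xa, ∑ ya, QA (xa, ya) = margXA P xa) ∧
      (∑ p : XA × XA, QA p * (alphaF P p.1 * (if p.1 = p.2 then 0 else 1))) ≤
        Δ - (1 - ∑ xa, margXA P xa * alphaF P xa) ∧
      mutInfo QA = r}, (0:ℝ) ≤ r := by
    rintro r ⟨QA, hpmf, _, _, rfl⟩
    exact mutInfo_nonneg hpmf
  have hS2mem : mutInfo QA0 ∈ {r : ℝ | ∃ QA : XA × XA → ℝ, IsPMF QA ∧
      (∀ xa, ∑ ya, QA (xa, ya) = margXA P xa) ∧
      (∑ p : XA × XA, QA p * (alphaF P p.1 * (if p.1 = p.2 then 0 else 1))) ≤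
        Δ - (1 - ∑ xa, margXA P xa * alphaF P xa) ∧
      mutInfo QA = r} := ⟨QA0, hQA0pmf, hQA0m, hQA0d, rfl⟩
  rw [RAerr]
  apply le_antisymm
  · refine le_csInf ⟨_, hS2mem⟩ ?_
    intro r hr
    exact csInf_le ⟨0, hbdd1⟩ (hfwd r hr)
  · refine le_csInf ⟨_, hfwd _ hS2mem⟩ ?_
    rintro r ⟨Q, hfeas, hED, rfl⟩
    obtain ⟨QA, hpmf, hmarg, hEDge, hMIle⟩ := backward_aux P hfull hP1 Q hfeas
    have hd : (∑ p : XA × XA, QA p * (alphaF P p.1 * (if p.1 = p.2 then 0 else 1))) ≤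
        Δ - (1 - ∑ xa, margXA P xa * alphaF P xa) := by
      rw [dist_accounting P QA hmarg]
      linarith
    exact le_trans (csInf_le ⟨0, hbdd2⟩ ⟨QA, hpmf, hmarg, hd, rfl⟩) hMIle
end
end

section
/- Let Q' be any feasible joint pmf on (𝒳_A × 𝒳_{A^c}) × 𝒴 (Markov chain X_{A^c} — X_A — Y). Fix a map MAP : 𝒳_A → 𝒳_{A^c} with MAP(y_A) ∈ argmax_{x' ∈ 𝒳_{A^c}} P_{X_{A^c}|X_A}(x'|y_A), and define a joint pmf Q by Q(x_A, x_{A^c}, (y_A, y_{A^c})) = Q'_{X Y_A}(x_A, x_{A^c}, y_A) · 1(y_{A^c} = MAP(y_A)), where Q'_{X Y_A} is the marginal of Q' on (𝒳_A × 𝒳_{A^c}) × 𝒳_A obtained by summing out y_{A^c}. Then Q is feasible, Q satisfies the longer Markov chain X_{A^c} — X_A — Y_A — Y_{A^c} (i.e., under Q each of X_{A^c} — X_A — (Y_A, Y_{A^c}) and (X_A, X_{A^c}) — Y_A — Y_{A^c} holds), and E_Q[1(X ≠ Y)] ≤ E_{Q'}[1(X ≠ Y)]. -/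
noncomputable section

variable {XA XAc Y : Type*} [Fintype XA] [Fintype XAc] [Fintype Y]

variable [DecidableEq XA] [DecidableEq XAc]

/-- The joint pmf `Q` built from `Q'` by replacing the `Y_{A^c}`-component with the
MAP estimate of `X_{A^c}` from `Y_A`:
`Q(x_A, x_{A^c}, (y_A, y_{A^c})) = Q'_{X Y_A}(x_A, x_{A^c}, y_A) 1(y_{A^c} = MAP(y_A))`. -/
def mapQ (Q' : (XA × XAc) × (XA × XAc) → ℝ) (MAP : XA → XAc) :
    (XA × XAc) × (XA × XAc) → ℝ :=
  fun p => (∑ y', Q' (p.1, (p.2.1, y'))) * (if p.2.2 = MAP p.2.1 then 1 else 0)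

/-!
Summing out `y_{A^c}`, the pmfs `Q` and `Q'` have the same `(X, Y_A)`-marginal, so `Q` inherits
feasibility from `Q'`, and `Q(x, y)` factors as `f(x, y_A) g(y_A, y_{A^c})`, which is the longer
Markov chain. The Markov chain of `Q'` makes `Q'(x_A, x', y)` proportional to
`P(x_A, x') Q'_{X_A Y}(x_A, y)`, so the probability `∑_{x'} Q'(x_A, x', (x_A, x'))` of a correct
guess grows when `P(x_A, x')` is replaced by its maximum `P(x_A, MAP(x_A))`; the result is exactly
the probability of a correct guess under `Q`.
-/

section

variable {α β γ δ : Type*}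

theorem sum_sum_eq_margXA [Fintype β] [Fintype γ] {P : α × β → ℝ} {Q : (α × β) × γ → ℝ}
    (hmarg : ∀ x, ∑ y, Q (x, y) = P x) (a : α) :
    ∑ b, ∑ y, Q ((a, b), y) = margXA P a := by
  simp only [hmarg]
  rfl

theorem Feasible.mul_margXA [Fintype α] [Fintype β] [Fintype γ] {P : α × β → ℝ}
    {Q : (α × β) × γ → ℝ} (hQ : Feasible P Q) (a : α) (b : β) (y : γ) :
    Q ((a, b), y) * margXA P a = P (a, b) * ∑ b', Q ((a, b'), y) := by
  rw [← sum_sum_eq_margXA hQ.2.1]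
  exact hQ.2.2 a b y

theorem Feasible.sum_snd_mul_margXA [Fintype α] [Fintype β] [Fintype γ] [Fintype δ]
    {P : α × β → ℝ} {Q : (α × β) × (γ × δ) → ℝ} (hQ : Feasible P Q) (a : α) (b : β) (y : γ) :
    (∑ c, Q ((a, b), (y, c))) * margXA P a = P (a, b) * ∑ b', ∑ c, Q ((a, b'), (y, c)) :=
  calc (∑ c, Q ((a, b), (y, c))) * margXA P a
      = ∑ c, P (a, b) * ∑ b', Q ((a, b'), (y, c)) := by
        rw [Finset.sum_mul]
        exact Finset.sum_congr rfl fun c _ => hQ.mul_margXA a b (y, c)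
    _ = P (a, b) * ∑ b', ∑ c, Q ((a, b'), (y, c)) := by
        rw [← Finset.mul_sum, Finset.sum_comm]

theorem margXA_pos [Fintype β] {P : α × β → ℝ} (hP : ∀ x, 0 < P x) (x : α × β) :
    0 < margXA P x.1 :=
  (hP x).trans_le (Finset.single_le_sum (fun b _ => (hP (x.1, b)).le) (Finset.mem_univ x.2))

theorem le_of_condP_le [Fintype β] {P : α × β → ℝ} (hP : ∀ x, 0 < P x) {a : α} {b b' : β}
    (h : condP P b a ≤ condP P b' a) : P (a, b) ≤ P (a, b') :=
  (div_le_div_iff_of_pos_right (margXA_pos hP (a, b))).mp h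

/-- A joint law of the form `f(x, a) g(a, c)` makes `X — A — C` a Markov chain. -/
theorem markov_of_factor [Fintype α] [Fintype γ] (f : α → β → ℝ) (g : β → γ → ℝ)
    (x : α) (a : β) (c : γ) :
    f x a * g a c * ∑ x', ∑ c', f x' a * g a c' =
      (∑ c', f x a * g a c') * ∑ x', f x' a * g a c := by
  simp only [← Finset.mul_sum, ← Finset.sum_mul]
  ring

theorem sum_diag_le_sum_row_of_factor [Fintype β] (q : β → β → ℝ) (p r : β → ℝ) {M : ℝ}
    (hM : 0 < M) (hr : ∀ y, 0 ≤ r y) (hq : ∀ x y, q x y * M = p x * r y) {m : β}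
    (hm : ∀ x, p x ≤ p m) :
    ∑ x, q x x ≤ ∑ y, q m y := by
  rw [← mul_le_mul_iff_of_pos_right hM, Finset.sum_mul, Finset.sum_mul]
  calc ∑ x, q x x * M = ∑ x, p x * r x := Finset.sum_congr rfl fun x _ => hq x x
    _ ≤ ∑ x, p m * r x :=
        Finset.sum_le_sum fun x _ => mul_le_mul_of_nonneg_right (hm x) (hr x)
    _ = ∑ y, q m y * M := Finset.sum_congr rfl fun y _ => (hq m y).symm

theorem expDist_dErr_eq [Fintype α] [Fintype β] [DecidableEq α] [DecidableEq β]
    {R : (α × β) × (α × β) → ℝ} (h : ∑ p, R p = 1) : expDist dErr R = 1 - ∑ x, R (x, x) := by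
  have hsplit : ∀ p : (α × β) × (α × β),
      R p * dErr p.1 p.2 = R p - if p.1 = p.2 then R p else 0 := by
    intro p
    by_cases hp : p.1 = p.2 <;> simp [dErr, hp]
  rw [expDist, Finset.sum_congr rfl fun p _ => hsplit p, Finset.sum_sub_distrib, h,
    Fintype.sum_prod_type]
  simp only [Finset.sum_ite_eq, Finset.mem_univ, if_true]

end

section

variable {α β : Type*} [Fintype β] [DecidableEq β] (Q' : (α × β) × (α × β) → ℝ) (MAP : α → β)

theorem sum_mapQ_snd (x : α × β) (a : α) :
    ∑ c, mapQ Q' MAP (x, (a, c)) = ∑ c, Q' (x, (a, c)) := by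
  simp [mapQ]

theorem sum_mapQ_eq [Fintype α] (x : α × β) : ∑ y, mapQ Q' MAP (x, y) = ∑ y, Q' (x, y) := by
  simp only [Fintype.sum_prod_type (f := fun y => mapQ Q' MAP (x, y)), sum_mapQ_snd,
    ← Fintype.sum_prod_type (f := fun y => Q' (x, y))]

theorem sum_mapQ [Fintype α] : ∑ p, mapQ Q' MAP p = ∑ p, Q' p := by
  simp only [Fintype.sum_prod_type (f := mapQ Q' MAP), sum_mapQ_eq,
    ← Fintype.sum_prod_type (f := Q')]

theorem mapQ_nonneg {Q' : (α × β) × (α × β) → ℝ} (h : ∀ p, 0 ≤ Q' p) (p : (α × β) × (α × β)) :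
    0 ≤ mapQ Q' MAP p :=
  mul_nonneg (Finset.sum_nonneg fun _ _ => h _) (by positivity)

theorem sum_mapQ_diag [Fintype α] :
    ∑ x, mapQ Q' MAP (x, x) = ∑ a, ∑ c, Q' ((a, MAP a), (a, c)) := by
  rw [Fintype.sum_prod_type]
  simp [mapQ]

variable [Fintype α] {Q'} {P : α × β → ℝ}

theorem feasible_mapQ (hQ' : Feasible P Q') : Feasible P (mapQ Q' MAP) := by
  have hmarg : ∀ x, ∑ y, mapQ Q' MAP (x, y) = P x :=
    fun x => (sum_mapQ_eq Q' MAP x).trans (hQ'.2.1 x)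
  refine ⟨⟨mapQ_nonneg MAP hQ'.1.1, (sum_mapQ Q' MAP).trans hQ'.1.2⟩, hmarg, ?_⟩
  rintro a b ⟨a', c⟩
  rw [sum_sum_eq_margXA hmarg]
  by_cases hc : c = MAP a'
  · simp only [mapQ, hc, ↓reduceIte, mul_one]
    exact hQ'.sum_snd_mul_margXA a b a'
  · simp [mapQ, hc]

theorem sum_diag_le_sum_diag_mapQ (hP : ∀ x, 0 < P x) (hQ' : Feasible P Q')
    (hMAP : ∀ a b, condP P b a ≤ condP P (MAP a) a) :
    ∑ x, Q' (x, x) ≤ ∑ x, mapQ Q' MAP (x, x) := by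
  rw [sum_mapQ_diag, Fintype.sum_prod_type]
  refine Finset.sum_le_sum fun a _ => ?_
  exact sum_diag_le_sum_row_of_factor (fun b c => Q' ((a, b), (a, c))) (fun b => P (a, b))
    (fun c => ∑ b', Q' ((a, b'), (a, c))) (margXA_pos hP (a, MAP a))
    (fun c => Finset.sum_nonneg fun _ _ => hQ'.1.1 _) (fun b c => hQ'.mul_margXA a b (a, c))
    (fun b => le_of_condP_le hP (hMAP a b))

end

theorem stmt4_general
    (P : XA × XAc → ℝ) (hfull : ∀ x, 0 < P x)
    (Q' : (XA × XAc) × (XA × XAc) → ℝ) (hQ' : Feasible P Q')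
    (MAP : XA → XAc) (hMAP : ∀ ya x', condP P x' ya ≤ condP P (MAP ya) ya) :
    Feasible P (mapQ Q' MAP) ∧
    (∀ (x : XA × XAc) (ya : XA) (yac : XAc),
      mapQ Q' MAP (x, (ya, yac)) * (∑ x'' : XA × XAc, ∑ y2, mapQ Q' MAP (x'', (ya, y2))) =
        (∑ y2, mapQ Q' MAP (x, (ya, y2))) * (∑ x'' : XA × XAc, mapQ Q' MAP (x'', (ya, yac)))) ∧
    expDist dErr (mapQ Q' MAP) ≤ expDist dErr Q' := by
  have hfeas := feasible_mapQ MAP hQ'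
  refine ⟨hfeas, fun x ya yac => ?_, ?_⟩
  · exact markov_of_factor (fun x ya => ∑ c, Q' (x, (ya, c)))
      (fun ya yac => if yac = MAP ya then 1 else 0) x ya yac
  · rw [expDist_dErr_eq hQ'.1.2, expDist_dErr_eq hfeas.1.2]
    linarith [sum_diag_le_sum_diag_mapQ MAP hfull hQ' hMAP]

/-- the MAP-modified pmf `Q` is feasible, satisfies the longer Markov
chain `X_{A^c} — X_A — Y_A — Y_{A^c}`, and has no larger expected probability of error. -/
theorem stmt4 [Nonempty XA] [Nonempty XAc]
    (P : XA × XAc → ℝ) (hP : IsPMF P) (hfull : ∀ x, 0 < P x)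
    (Q' : (XA × XAc) × (XA × XAc) → ℝ) (hQ' : Feasible P Q')
    (MAP : XA → XAc) (hMAP : ∀ ya x', condP P x' ya ≤ condP P (MAP ya) ya) :
    Feasible P (mapQ Q' MAP) ∧
    (∀ (x : XA × XAc) (ya : XA) (yac : XAc),
      mapQ Q' MAP (x, (ya, yac)) * (∑ x'' : XA × XAc, ∑ y2, mapQ Q' MAP (x'', (ya, y2))) =
        (∑ y2, mapQ Q' MAP (x, (ya, y2))) * (∑ x'' : XA × XAc, mapQ Q' MAP (x'', (ya, yac)))) ∧
    expDist dErr (mapQ Q' MAP) ≤ expDist dErr Q' :=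
  stmt4_general P hfull Q' hQ' MAP hMAP
end
end

section
/- With Q constructed from a feasible Q' via the MAP map as described, the expected probability-of-error distortion of Q satisfies E_Q[1(X ≠ Y)] = 1 − Σ_{x_A} P_{X_A}(x_A) α(x_A) + Σ_{x_A, y_A} Q_{X_A Y_A}(x_A, y_A) α(x_A) 1(x_A ≠ y_A), where Q_{X_A Y_A} is the joint marginal of Q on the pair (X_A, Y_A). -/
noncomputable section

variable {XA XAc Y : Type*} [Fintype XA] [Fintype XAc] [Fintype Y]

variable [DecidableEq XA] [DecidableEq XAc]

/-- the expected probability-of-error distortion of `Q` equals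
`1 − E[α(X_A)] + E_Q[α(X_A) 1(X_A ≠ Y_A)]`. -/
theorem stmt5 [Nonempty XA] [Nonempty XAc]
    (P : XA × XAc → ℝ) (hP : IsPMF P) (hfull : ∀ x, 0 < P x)
    (Q' : (XA × XAc) × (XA × XAc) → ℝ) (hQ' : Feasible P Q')
    (MAP : XA → XAc) (hMAP : ∀ ya x', condP P x' ya ≤ condP P (MAP ya) ya) :
    expDist dErr (mapQ Q' MAP) =
      1 - (∑ xa, margXA P xa * alphaF P xa) +
        ∑ p : XA × XA,
          (∑ x' : XAc, ∑ y' : XAc, mapQ Q' MAP ((p.1, x'), (p.2, y'))) *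
            (alphaF P p.1 * (if p.1 = p.2 then 0 else 1)) := by
  obtain ⟨⟨hQnn, hQsum⟩, hmarg, hmc⟩ := hQ'
  classical
  set N : XA → XA → ℝ := fun xa ya => ∑ x' : XAc, ∑ y' : XAc, Q' ((xa, x'), (ya, y')) with hN
  set M : XA → XAc → XA → ℝ := fun xa x' ya => ∑ y' : XAc, Q' ((xa, x'), (ya, y')) with hM
  have hSm : ∀ xa : XA, (∑ x'' : XAc, ∑ y : XA × XAc, Q' ((xa, x''), y)) = margXA P xa := by
    intro xa
    unfold margXA
    exact Finset.sum_congr rfl fun x'' _ => hmarg _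
  have hSpos : ∀ xa : XA, 0 < margXA P xa := by
    intro xa
    exact Finset.sum_pos (fun x' _ => hfull _) Finset.univ_nonempty
  have hMN : ∀ xa x' ya, M xa x' ya * margXA P xa = P (xa, x') * N xa ya := by
    intro xa x' ya
    calc M xa x' ya * margXA P xa
        = ∑ y' : XAc, Q' ((xa, x'), (ya, y')) * (∑ x'' : XAc, ∑ y : XA × XAc, Q' ((xa, x''), y)) := by
          rw [← hSm xa, hM, Finset.sum_mul]
      _ = ∑ y' : XAc, P (xa, x') * (∑ x'' : XAc, Q' ((xa, x''), (ya, y'))) :=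
          Finset.sum_congr rfl fun y' _ => hmc xa x' (ya, y')
      _ = P (xa, x') * N xa ya := by rw [← Finset.mul_sum, hN]; rw [Finset.sum_comm]
  have halpha : ∀ xa, alphaF P xa = condP P (MAP xa) xa := by
    intro xa
    unfold alphaF
    apply le_antisymm
    · exact Finset.sup'_le Finset.univ_nonempty _ fun x' _ => hMAP xa x'
    · exact Finset.le_sup' (fun x' => condP P x' xa) (Finset.mem_univ (MAP xa))
  have hMdiag : ∀ xa, M xa (MAP xa) xa = alphaF P xa * N xa xa := by
    intro xa
    rw [halpha]
    unfold condP
    rw [div_mul_eq_mul_div, eq_div_iff (hSpos xa).ne']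
    exact hMN xa (MAP xa) xa
  have hNsum : ∀ xa ya, (∑ x' : XAc, ∑ y' : XAc, mapQ Q' MAP ((xa, x'), (ya, y'))) = N xa ya := by
    intro xa ya
    unfold mapQ
    simp only [mul_ite, mul_one, mul_zero]
    rw [hN]
    refine Finset.sum_congr rfl fun x' _ => ?_
    rw [Finset.sum_ite_eq' Finset.univ (MAP ya)]
    simp [hM]
  have hNmarg : ∀ xa, (∑ ya : XA, N xa ya) = margXA P xa := by
    intro xa
    rw [hN]
    simp only
    rw [Finset.sum_comm]
    unfold margXA
    refine Finset.sum_congr rfl fun x' _ => ?_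
    rw [← hmarg (xa, x'), Fintype.sum_prod_type]
  -- LHS
  have key : ∀ (x : XA × XAc) (ya : XA),
      (∑ y' : XAc, mapQ Q' MAP (x, (ya, y')) * dErr x (ya, y'))
        = M x.1 x.2 ya * dErr x (ya, MAP ya) := by
    intro x ya
    unfold mapQ
    simp only [mul_ite, mul_one, mul_zero, ite_mul, zero_mul]
    rw [Finset.sum_ite_eq' Finset.univ (MAP ya)]
    simp [hM]
  have hL : expDist dErr (mapQ Q' MAP) = 1 - ∑ xa, alphaF P xa * N xa xa := by
    unfold expDist
    rw [Fintype.sum_prod_type]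
    have h1 : ∀ x : XA × XAc,
        (∑ y : XA × XAc, mapQ Q' MAP (x, y) * dErr x y)
          = ∑ ya : XA, M x.1 x.2 ya * dErr x (ya, MAP ya) := by
      intro x
      rw [Fintype.sum_prod_type]
      exact Finset.sum_congr rfl fun ya _ => key x ya
    rw [Finset.sum_congr rfl fun x _ => h1 x]
    have h2 : ∀ (x : XA × XAc) (ya : XA),
        M x.1 x.2 ya * dErr x (ya, MAP ya)
          = M x.1 x.2 ya - M x.1 x.2 ya * (if x = (ya, MAP ya) then 1 else 0) := by
      intro x ya
      unfold dErr
      by_cases h : x = (ya, MAP ya) <;> simp [h]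
    simp only [h2, Finset.sum_sub_distrib]
    have h3 : (∑ x : XA × XAc, ∑ ya : XA, M x.1 x.2 ya) = 1 := by
      have he : ∀ x : XA × XAc, (∑ ya : XA, M x.1 x.2 ya) = ∑ y : XA × XAc, Q' (x, y) := by
        intro x; rw [Fintype.sum_prod_type]
      rw [Finset.sum_congr rfl fun x _ => he x, ← Fintype.sum_prod_type, hQsum]
    have h4 : (∑ x : XA × XAc, ∑ ya : XA, M x.1 x.2 ya * (if x = (ya, MAP ya) then 1 else 0))
        = ∑ xa, alphaF P xa * N xa xa := by
      rw [Finset.sum_comm]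
      refine Finset.sum_congr rfl fun ya _ => ?_
      simp only [mul_ite, mul_one, mul_zero]
      rw [Finset.sum_ite_eq' Finset.univ ((ya, MAP ya) : XA × XAc)]
      simpa using hMdiag ya
    rw [h3, h4]
  rw [hL]
  -- RHS
  have hR2 : ∀ p : XA × XA,
      (∑ x' : XAc, ∑ y' : XAc, mapQ Q' MAP ((p.1, x'), (p.2, y'))) *
          (alphaF P p.1 * (if p.1 = p.2 then 0 else 1))
        = N p.1 p.2 * alphaF P p.1 - N p.1 p.2 * alphaF P p.1 * (if p.1 = p.2 then 1 else 0) := by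
    intro p
    rw [hNsum]
    by_cases h : p.1 = p.2 <;> simp [h] <;> ring
  simp only [hR2, Finset.sum_sub_distrib]
  have hA : (∑ p : XA × XA, N p.1 p.2 * alphaF P p.1) = ∑ xa, margXA P xa * alphaF P xa := by
    rw [Fintype.sum_prod_type]
    refine Finset.sum_congr rfl fun xa _ => ?_
    dsimp only
    rw [← Finset.sum_mul, hNmarg]
  have hB : (∑ p : XA × XA, N p.1 p.2 * alphaF P p.1 * (if p.1 = p.2 then 1 else 0))
      = ∑ xa, alphaF P xa * N xa xa := by
    rw [Fintype.sum_prod_type]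
    refine Finset.sum_congr rfl fun xa _ => ?_
    dsimp only
    simp only [mul_ite, mul_one, mul_zero]
    rw [Finset.sum_ite_eq Finset.univ xa]
    simp [mul_comm]
  rw [hA, hB]
  ring
end
end

section
/- With Q constructed from a feasible Q' via the MAP map as described, the mutual information satisfies I_Q(X_A ∧ (Y_A, Y_{A^c})) = I_Q(X_A ∧ Y_A) = I_{Q'}(X_A ∧ Y_A) ≤ I_{Q'}(X_A ∧ (Y_A, Y_{A^c})). -/
noncomputable section

variable {XA XAc Y : Type*} [Fintype XA] [Fintype XAc] [Fintype Y]

variable [DecidableEq XA] [DecidableEq XAc]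

/-- Marginal of a joint pmf on `(X_A, X_{A^c}) × (Y_A, Y_{A^c})` on the pair `(X_A, Y_A)`. -/
def margAYA (Q : (XA × XAc) × (XA × XAc) → ℝ) : XA × XA → ℝ :=
  fun p => ∑ x' : XAc, ∑ y' : XAc, Q ((p.1, x'), (p.2, y'))

/-!
Replacing `Y_{A^c}` by `MAP(Y_A)` leaves the law of `(X_A, Y_A)` untouched, and appending a
deterministic function of `Y_A` to `Y_A` does not change its mutual information with `X_A`; this
gives the two equalities. The inequality is data processing: for a law `p(x, y, z)` the gap
`I(X ∧ (Y, Z)) - I(X ∧ Y)` equals `∑ p log (p / r)` for the Markov approximation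
`r(x, y, z) = p(x, y) p(y, z) / p(y)`, which has total mass at most that of `p`, so Gibbs' inequality `a - b ≤ a log (a / b)` makes it
nonnegative.
-/

open Real Finset

lemma sub_le_mul_log_div {a b : ℝ} (ha : 0 ≤ a) (hb : 0 ≤ b) (hab : 0 < a → 0 < b) :
    a - b ≤ a * log (a / b) := by
  rcases ha.eq_or_lt with rfl | ha
  · simpa using hb
  have hb := hab ha
  have hlog := one_sub_inv_le_log_of_pos (div_pos ha hb)
  rw [inv_div] at hlog
  calc a - b = a * (1 - b / a) := by field_simp
    _ ≤ a * log (a / b) := mul_le_mul_of_nonneg_left hlog ha.le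

section Marginals

variable {α β γ : Type*} [Fintype α] [Fintype β] [Fintype γ]

def marginalFst (Q : α × β → ℝ) (a : α) : ℝ := ∑ b, Q (a, b)

def marginalSnd (Q : α × β → ℝ) (b : β) : ℝ := ∑ a, Q (a, b)

lemma mutInfo_eq_sum_marginal (Q : α × β → ℝ) :
    mutInfo Q = ∑ z, Q z * log (Q z / (marginalFst Q z.1 * marginalSnd Q z.2)) := rfl

omit [Fintype α] in
lemma marginalFst_pos {Q : α × β → ℝ} (hQ : ∀ z, 0 ≤ Q z) {z : α × β} (hz : 0 < Q z) :
    0 < marginalFst Q z.1 :=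
  sum_pos' (fun _ _ => hQ _) ⟨z.2, mem_univ _, hz⟩

omit [Fintype β] in
lemma marginalSnd_pos {Q : α × β → ℝ} (hQ : ∀ z, 0 ≤ Q z) {z : α × β} (hz : 0 < Q z) :
    0 < marginalSnd Q z.2 :=
  sum_pos' (fun _ _ => hQ _) ⟨z.1, mem_univ _, hz⟩

def margXY (p : α × (β × γ) → ℝ) : α × β → ℝ := fun z => ∑ c, p (z.1, (z.2, c))

variable {p : α × (β × γ) → ℝ}

omit [Fintype α] [Fintype β] in
lemma margXY_nonneg (hp : ∀ z, 0 ≤ p z) (z : α × β) : 0 ≤ margXY p z :=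
  sum_nonneg fun _ _ => hp _

omit [Fintype α] [Fintype β] in
lemma margXY_pos (hp : ∀ z, 0 ≤ p z) {z : α × (β × γ)} (hz : 0 < p z) :
    0 < margXY p (z.1, z.2.1) :=
  sum_pos' (fun _ _ => hp _) ⟨z.2.2, mem_univ _, hz⟩

omit [Fintype α] in
lemma marginalFst_margXY (p : α × (β × γ) → ℝ) (a : α) :
    marginalFst (margXY p) a = marginalFst p a := by
  simp only [marginalFst, margXY, Fintype.sum_prod_type]

lemma sum_margXY_mul (p : α × (β × γ) → ℝ) (f : α × β → ℝ) :
    ∑ z, margXY p z * f z = ∑ z, p z * f (z.1, z.2.1) := by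
  simp only [margXY, sum_mul, Fintype.sum_prod_type]

def markovApprox (p : α × (β × γ) → ℝ) (z : α × (β × γ)) : ℝ :=
  margXY p (z.1, z.2.1) * marginalSnd p z.2 / marginalSnd (margXY p) z.2.1

omit [Fintype β] in
lemma markovApprox_nonneg (hp : ∀ z, 0 ≤ p z) (z : α × (β × γ)) : 0 ≤ markovApprox p z :=
  div_nonneg (mul_nonneg (margXY_nonneg hp _) (sum_nonneg fun _ _ => hp _))
    (sum_nonneg fun _ _ => margXY_nonneg hp _)

omit [Fintype β] in
lemma markovApprox_pos (hp : ∀ z, 0 ≤ p z) {z : α × (β × γ)} (hz : 0 < p z) :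
    0 < markovApprox p z :=
  div_pos (mul_pos (margXY_pos hp hz) (marginalSnd_pos hp hz))
    (marginalSnd_pos (margXY_nonneg hp) (margXY_pos hp hz))

lemma sum_markovApprox_le (hp : ∀ z, 0 ≤ p z) : ∑ z, markovApprox p z ≤ ∑ z, p z := by
  have hfiber (y : β × γ) : ∑ a, markovApprox p (a, y) ≤ marginalSnd p y := by
    simp only [markovApprox, ← sum_div, ← sum_mul]
    change marginalSnd (margXY p) y.1 * _ / _ ≤ _
    rcases eq_or_ne (marginalSnd (margXY p) y.1) 0 with h | h
    · rw [h, zero_mul, zero_div]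
      exact sum_nonneg fun _ _ => hp _
    · rw [mul_div_cancel_left₀ _ h]
  calc ∑ z, markovApprox p z = ∑ y, ∑ a, markovApprox p (a, y) := Fintype.sum_prod_type_right _
    _ ≤ ∑ y, marginalSnd p y := sum_le_sum fun y _ => hfiber y
    _ = ∑ z, p z := (Fintype.sum_prod_type_right _).symm

lemma log_div_marginal_eq (hp : ∀ z, 0 ≤ p z) {z : α × (β × γ)} (hz : 0 < p z) :
    log (p z / (marginalFst p z.1 * marginalSnd p z.2)) =
      log (margXY p (z.1, z.2.1) / (marginalFst p z.1 * marginalSnd (margXY p) z.2.1)) +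
        log (p z / markovApprox p z) := by
  have := marginalFst_pos hp hz
  have := marginalSnd_pos hp hz
  have := margXY_pos hp hz
  have := marginalSnd_pos (margXY_nonneg hp) (margXY_pos hp hz)
  have := markovApprox_pos hp hz
  rw [← log_mul (by positivity) (by positivity), markovApprox]
  congr 1
  field_simp

theorem mutInfo_margXY_le (hp : ∀ z, 0 ≤ p z) : mutInfo (margXY p) ≤ mutInfo p := by
  have hgap : mutInfo p - mutInfo (margXY p) = ∑ z, p z * log (p z / markovApprox p z) := by
    rw [mutInfo_eq_sum_marginal (margXY p), sum_margXY_mul, mutInfo_eq_sum_marginal,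
      ← sum_sub_distrib]
    refine sum_congr rfl fun z _ => ?_
    rcases (hp z).eq_or_lt with h | h
    · simp [← h]
    · rw [marginalFst_margXY, log_div_marginal_eq hp h]
      ring
  have hgibbs : ∑ z, (p z - markovApprox p z) ≤ ∑ z, p z * log (p z / markovApprox p z) :=
    sum_le_sum fun z _ =>
      sub_le_mul_log_div (hp z) (markovApprox_nonneg hp z) (markovApprox_pos hp)
  rw [sum_sub_distrib] at hgibbs
  linarith [sum_markovApprox_le hp]

theorem mutInfo_extend_deterministic [DecidableEq γ] (f : α × β → ℝ) (g : β → γ) :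
    mutInfo (fun z : α × (β × γ) => f (z.1, z.2.1) * if z.2.2 = g z.2.1 then 1 else 0) =
      mutInfo f := by
  have hfst (a : α) :
      ∑ y : β × γ, (if y.2 = g y.1 then f (a, y.1) else 0) = ∑ b, f (a, b) := by
    simp [Fintype.sum_prod_type]
  rw [mutInfo, mutInfo, Fintype.sum_prod_type, Fintype.sum_prod_type]
  refine sum_congr rfl fun a _ => ?_
  rw [Fintype.sum_prod_type]
  refine sum_congr rfl fun b _ => ?_
  rw [Fintype.sum_eq_single (g b) fun c hc => by simp [hc]]
  simp [hfst]

end Marginals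

omit [Fintype XA] [DecidableEq XA] in
lemma margAYA_mapQ (Q' : (XA × XAc) × (XA × XAc) → ℝ) (MAP : XA → XAc) :
    margAYA (mapQ Q' MAP) = margAYA Q' := by
  funext z
  simp [margAYA, mapQ]

omit [Fintype XA] [DecidableEq XA] in
lemma margAY_mapQ (Q' : (XA × XAc) × (XA × XAc) → ℝ) (MAP : XA → XAc) :
    margAY (mapQ Q' MAP) =
      fun z => margAYA Q' (z.1, z.2.1) * if z.2.2 = MAP z.2.1 then 1 else 0 := by
  funext z
  simp only [margAY, mapQ, margAYA, sum_mul]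

omit [Fintype XA] [DecidableEq XA] [DecidableEq XAc] in
lemma margAYA_eq_margXY_margAY (Q : (XA × XAc) × (XA × XAc) → ℝ) :
    margAYA Q = margXY (margAY Q) := by
  funext z
  exact sum_comm

theorem stmt6_general
    (P : XA × XAc → ℝ)
    (Q' : (XA × XAc) × (XA × XAc) → ℝ) (hQ' : Feasible P Q')
    (MAP : XA → XAc) :
    mutInfo (margAY (mapQ Q' MAP)) = mutInfo (margAYA (mapQ Q' MAP)) ∧
    mutInfo (margAYA (mapQ Q' MAP)) = mutInfo (margAYA Q') ∧
    mutInfo (margAYA Q') ≤ mutInfo (margAY Q') := by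
  have hdet : mutInfo (margAY (mapQ Q' MAP)) = mutInfo (margAYA Q') := by
    rw [margAY_mapQ]
    exact mutInfo_extend_deterministic _ _
  refine ⟨by rw [hdet, margAYA_mapQ], by rw [margAYA_mapQ], ?_⟩
  rw [margAYA_eq_margXY_margAY]
  exact mutInfo_margXY_le fun z => sum_nonneg fun _ _ => hQ'.1.1 _

/-- `I_Q(X_A ∧ (Y_A,Y_{A^c})) = I_Q(X_A ∧ Y_A) = I_{Q'}(X_A ∧ Y_A) ≤ I_{Q'}(X_A ∧ (Y_A,Y_{A^c}))`. -/
theorem stmt6 [Nonempty XA] [Nonempty XAc]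
    (P : XA × XAc → ℝ) (hP : IsPMF P) (hfull : ∀ x, 0 < P x)
    (Q' : (XA × XAc) × (XA × XAc) → ℝ) (hQ' : Feasible P Q')
    (MAP : XA → XAc) (hMAP : ∀ ya x', condP P x' ya ≤ condP P (MAP ya) ya) :
    mutInfo (margAY (mapQ Q' MAP)) = mutInfo (margAYA (mapQ Q' MAP)) ∧
    mutInfo (margAYA (mapQ Q' MAP)) = mutInfo (margAYA Q') ∧
    mutInfo (margAYA Q') ≤ mutInfo (margAY Q') :=
  stmt6_general P Q' hQ' MAP
end
end

section
/- Under hypotheses (i)–(iii), for every t = 1, …, n the random vector (A^t, B^t, C^t) is independent of the random vector (A_{t+1}^n, B_{t+1}^n). -/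
/-!
Write `Y_s = (A_s, B_s)` and argue by induction on `t`. Split `(A^t, B^t, C^t)` into
`(Y^{t-1}, C^{t-1})`, `Y_t` and `C_t`. By (iii), `C_t` is conditionally independent of
`(Y^{t-1}, Y_{t+1}^n)` given `(Y_t, C^{t-1})`; the induction hypothesis makes `(Y^{t-1}, C^{t-1})`
independent of `(Y_t, Y_{t+1}^n)`, and (i) makes `Y_t` independent of `Y_{t+1}^n`. Multiplying
these out, `μ((A^t, B^t, C^t) = x, Y_{t+1}^n = z) = f(x) · μ(Y_{t+1}^n = z)` for some `f`, and
summing over `z` identifies `f(x)` with `μ((A^t, B^t, C^t) = x)`.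
-/

open MeasureTheory

noncomputable section

/-- Conditional independence of finite-valued random variables `U` and `V` given `W`:
`μ(U = u, V = v | W = w) = μ(U = u | W = w) · μ(V = v | W = w)` whenever
`μ(W = w) > 0`. -/
def CondIndepRV {Ω α β γ : Type*} [MeasurableSpace Ω] (μ : Measure Ω)
    (U : Ω → α) (V : Ω → β) (W : Ω → γ) : Prop :=
  ∀ u v w, 0 < (μ {ω | W ω = w}).toReal →
    (μ {ω | U ω = u ∧ V ω = v ∧ W ω = w}).toReal / (μ {ω | W ω = w}).toReal =
      ((μ {ω | U ω = u ∧ W ω = w}).toReal / (μ {ω | W ω = w}).toReal) *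
        ((μ {ω | V ω = v ∧ W ω = w}).toReal / (μ {ω | W ω = w}).toReal)

/-- Independence of a pair of finite-valued random variables. -/
def IndepRV {Ω α β : Type*} [MeasurableSpace Ω] (μ : Measure Ω)
    (U : Ω → α) (V : Ω → β) : Prop :=
  ∀ u v, (μ {ω | U ω = u ∧ V ω = v}).toReal =
    (μ {ω | U ω = u}).toReal * (μ {ω | V ω = v}).toReal

namespace IndepRV

variable {Ω α β α' β' : Type*} [MeasurableSpace Ω] {μ : Measure Ω} {U : Ω → α} {V : Ω → β}

theorem comp (h : IndepRV μ U V) {f : α → α'} {g : β → β'} (hf : f.Injective)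
    (hg : g.Injective) : IndepRV μ (f ∘ U) (g ∘ V) := by
  intro u' v'
  by_cases hu : ∃ u, f u = u'
  · by_cases hv : ∃ v, g v = v'
    · obtain ⟨u, rfl⟩ := hu
      obtain ⟨v, rfl⟩ := hv
      simpa only [Function.comp, hf.eq_iff, hg.eq_iff] using h u v
    · simp only [not_exists] at hv
      simp [hv]
  · simp only [not_exists] at hu
    simp [hu]

theorem of_comp {f : α → α'} {g : β → β'} (h : IndepRV μ (f ∘ U) (g ∘ V)) (hf : f.Injective)
    (hg : g.Injective) : IndepRV μ U V := by
  intro u v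
  simpa only [Function.comp, hf.eq_iff, hg.eq_iff] using h (f u) (g v)

theorem of_subsingleton [IsProbabilityMeasure μ] [Subsingleton α] : IndepRV μ U V := by
  intro u v
  simp [Subsingleton.elim _ u]

end IndepRV

theorem CondIndepRV.comp {Ω α β γ α' β' γ' : Type*} [MeasurableSpace Ω] {μ : Measure Ω}
    {U : Ω → α} {V : Ω → β} {W : Ω → γ} (h : CondIndepRV μ U V W)
    {f : α → α'} {g : β → β'} {k : γ → γ'} (hf : f.Injective) (hg : g.Injective)
    (hk : k.Injective) : CondIndepRV μ (f ∘ U) (g ∘ V) (k ∘ W) := by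
  intro u' v' w' hw'
  obtain ⟨w, rfl⟩ : ∃ w, k w = w' := by
    by_contra! hw
    simp [hw] at hw'
  by_cases hu : ∃ u, f u = u'
  · by_cases hv : ∃ v, g v = v'
    · obtain ⟨u, rfl⟩ := hu
      obtain ⟨v, rfl⟩ := hv
      simp only [Function.comp, hf.eq_iff, hg.eq_iff, hk.eq_iff] at hw' ⊢
      exact h u v w hw'
    · simp only [not_exists] at hv
      simp [hv]
  · simp only [not_exists] at hu
    simp [hu]

theorem measure_toReal_eq_sum_inter_fiber {Ω β : Type*} [MeasurableSpace Ω] (μ : Measure Ω)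
    [IsFiniteMeasure μ] [Fintype β] {V : Ω → β} (hV : ∀ v, MeasurableSet {ω | V ω = v})
    (S : Set Ω) : (μ S).toReal = ∑ v, (μ (S ∩ {ω | V ω = v})).toReal := by
  have hV' : ∀ v, MeasurableSet (V ⁻¹' {v}) := hV
  have := sum_measureReal_preimage_singleton (μ := μ.restrict S) Finset.univ (fun v _ => hV' v)
  simp only [measureReal_restrict_apply (hV' _), Finset.coe_univ, Set.preimage_univ,
    measureReal_restrict_apply_univ] at this
  exact this.symm.trans (Finset.sum_congr rfl fun v _ => by rw [Set.inter_comm]; rfl)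

section Factorization

variable {Ω α β : Type*} [MeasurableSpace Ω] {μ : Measure Ω} [IsProbabilityMeasure μ]
  [Fintype β] {U : Ω → α} {V : Ω → β}

theorem IndepRV.of_forall_exists_mul (hV : ∀ v, MeasurableSet {ω | V ω = v})
    (h : ∀ u, ∃ K, ∀ v, (μ {ω | U ω = u ∧ V ω = v}).toReal = K * (μ {ω | V ω = v}).toReal) :
    IndepRV μ U V := by
  intro u v
  obtain ⟨K, hK⟩ := h u
  have hU : (μ {ω | U ω = u}).toReal = K := by
    have hsum := measure_toReal_eq_sum_inter_fiber μ hV Set.univ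
    simp only [measure_univ, ENNReal.toReal_one, Set.univ_inter] at hsum
    calc (μ {ω | U ω = u}).toReal
        = ∑ v, (μ {ω | U ω = u ∧ V ω = v}).toReal := measure_toReal_eq_sum_inter_fiber μ hV _
      _ = K * ∑ v, (μ {ω | V ω = v}).toReal := by simp only [hK, Finset.mul_sum]
      _ = K := by rw [← hsum, mul_one]
  rw [hK, hU]

end Factorization

theorem measurableSet_fiber_prod {Ω α β : Type*} [MeasurableSpace Ω] {X : Ω → α} {Y : Ω → β}
    {x : α} {y : β} (hX : MeasurableSet {ω | X ω = x}) (hY : MeasurableSet {ω | Y ω = y}) :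
    MeasurableSet {ω | (X ω, Y ω) = (x, y)} := by
  simpa only [Prod.mk.injEq, Set.ofPred_and] using hX.inter hY

theorem measurableSet_fiber_pi {Ω ι : Type*} [MeasurableSpace Ω] [Countable ι] {E : ι → Type*}
    {Z : ∀ i, Ω → E i} (hZ : ∀ i z, MeasurableSet {ω | Z i ω = z}) (z : ∀ i, E i) :
    MeasurableSet {ω | (fun i => Z i ω) = z} := by
  simp only [funext_iff, Set.ofPred_forall]
  exact .iInter fun i => hZ i (z i)

theorem indepRV_restrict_of_disjoint {Ω ι : Type*} [MeasurableSpace Ω] {μ : Measure Ω}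
    [Fintype ι] {E : ι → Type*} (Y : ∀ i, Ω → E i)
    (hY : ∀ (T : Finset ι) (y : ∀ i, E i),
      (μ {ω | ∀ i ∈ T, Y i ω = y i}).toReal = ∏ i ∈ T, (μ {ω | Y i ω = y i}).toReal)
    {S T : Set ι} (hST : Disjoint S T) :
    IndepRV μ (fun ω (i : S) => Y i ω) (fun ω (i : T) => Y i ω) := by
  intro u v
  rcases Set.eq_empty_or_nonempty {ω | (fun i : S => Y i ω) = u} with hu | ⟨ω₁, rfl⟩
  · simp [hu, Set.ofPred_and]
  rcases Set.eq_empty_or_nonempty {ω | (fun i : T => Y i ω) = v} with hv | ⟨ω₂, rfl⟩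
  · simp [hv, Set.ofPred_and]
  classical
  -- `y` agrees with `ω₁` on `S` and with `ω₂` on `T`, so `hY` evaluates all three events
  let y i := if i ∈ S then Y i ω₁ else Y i ω₂
  have hfiber : ∀ (R : Set ι) ω₀, (∀ i ∈ R, y i = Y i ω₀) →
      {ω | (fun i : R => Y i ω) = fun i : R => Y i ω₀} = {ω | ∀ i ∈ R.toFinset, Y i ω = y i} := by
    intro R ω₀ hR
    ext ω
    simp only [Set.mem_ofPred_eq, funext_iff, Subtype.forall, Set.mem_toFinset]
    exact forall₂_congr fun i hi => by rw [hR i hi]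
  have hS := hfiber S ω₁ fun i hi => if_pos hi
  have hT := hfiber T ω₂ fun i hi => if_neg (Set.disjoint_right.1 hST hi)
  have hST' : {ω | (fun i : S => Y i ω) = (fun i : S => Y i ω₁) ∧
      (fun i : T => Y i ω) = (fun i : T => Y i ω₂)} =
      {ω | ∀ i ∈ S.toFinset ∪ T.toFinset, Y i ω = y i} := by
    rw [Set.ofPred_and, hS, hT]
    ext ω
    simp only [Set.mem_inter_iff, Set.mem_ofPred_eq, Finset.mem_union, or_imp, forall_and]
  simp only
  rw [hST', hS, hT, hY, hY, hY, Finset.prod_union (Set.disjoint_toFinset.2 hST)]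

theorem IndepRV.of_condIndepRV {Ω α β γ δ ε : Type*} [MeasurableSpace Ω] {μ : Measure Ω}
    [IsProbabilityMeasure μ] [Fintype ε] {P : Ω → α} {Q : Ω → β} {Y : Ω → γ} {C : Ω → δ}
    {Z : Ω → ε} (hZ : ∀ z, MeasurableSet {ω | Z ω = z})
    (hPQ : IndepRV μ (fun ω => (P ω, Q ω)) (fun ω => (Y ω, Z ω))) (hYZ : IndepRV μ Y Z)
    (hC : CondIndepRV μ C (fun ω => (P ω, Z ω)) (fun ω => (Y ω, Q ω))) :
    IndepRV μ (fun ω => ((P ω, Q ω), Y ω, C ω)) Z := by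
  refine IndepRV.of_forall_exists_mul hZ fun ⟨⟨p, q⟩, y, c⟩ => ?_
  set w := (μ {ω | (Y ω, Q ω) = (y, q)}).toReal
  -- by `hC`, `hPQ` and `hYZ`, with `x = ((p, q), y, c)`:
  -- `μ(x, Z = z) · w = μ(C = c, (Y, Q) = (y, q)) · μ((P, Q) = (p, q)) · μ(Y = y) · μ(Z = z)`
  refine ⟨(μ {ω | C ω = c ∧ (Y ω, Q ω) = (y, q)}).toReal *
    (μ {ω | (P ω, Q ω) = (p, q)}).toReal * (μ {ω | Y ω = y}).toReal / w, fun z => ?_⟩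
  have hE : {ω | ((P ω, Q ω), Y ω, C ω) = ((p, q), y, c) ∧ Z ω = z} =
      {ω | C ω = c ∧ (P ω, Z ω) = (p, z) ∧ (Y ω, Q ω) = (y, q)} := by
    ext; simp only [Set.mem_ofPred_eq, Prod.mk.injEq]; tauto
  rcases (ENNReal.toReal_nonneg : 0 ≤ w).eq_or_lt with hw | hw
  · have hle : (μ {ω | ((P ω, Q ω), Y ω, C ω) = ((p, q), y, c) ∧ Z ω = z}).toReal ≤ w :=
      ENNReal.toReal_mono (measure_ne_top _ _) (measure_mono (hE ▸ fun ω h => h.2.2))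
    have hw0 : w = 0 := hw.symm
    rw [hw0, div_zero, zero_mul]
    exact le_antisymm (hw0 ▸ hle) ENNReal.toReal_nonneg
  have hPZ : {ω | (P ω, Z ω) = (p, z) ∧ (Y ω, Q ω) = (y, q)} =
      {ω | (P ω, Q ω) = (p, q) ∧ (Y ω, Z ω) = (y, z)} := by
    ext; simp only [Set.mem_ofPred_eq, Prod.mk.injEq]; tauto
  have hYZ' : {ω | (Y ω, Z ω) = (y, z)} = {ω | Y ω = y ∧ Z ω = z} := by
    simp only [Prod.mk.injEq]
  have hci := hC c (p, z) (y, q) hw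
  simp only [hE, hPZ, hPQ (p, q) (y, z), hYZ', hYZ y z] at hci ⊢
  have hw0 : w ≠ 0 := hw.ne'
  field_simp at hci ⊢
  linear_combination hci

section Chain

variable {Ω ι : Type*} [MeasurableSpace Ω] {μ : Measure Ω} [IsProbabilityMeasure μ]
  [LinearOrder ι] [Fintype ι] {𝔄 𝔅 ℭ : ι → Type*} [∀ t, Fintype (𝔄 t)] [∀ t, Fintype (𝔅 t)]
  {A : ∀ t, Ω → 𝔄 t} {B : ∀ t, Ω → 𝔅 t} {C : ∀ t, Ω → ℭ t}

theorem indepRV_Iic_Ioi_of_indepRV_Iio_Ici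
    (hAm : ∀ t a, MeasurableSet {ω | A t ω = a}) (hBm : ∀ t b, MeasurableSet {ω | B t ω = b})
    (hAB : ∀ (T : Finset ι) (ab : ∀ t, 𝔄 t × 𝔅 t),
      (μ {ω | ∀ t ∈ T, (A t ω, B t ω) = ab t}).toReal =
        ∏ t ∈ T, (μ {ω | (A t ω, B t ω) = ab t}).toReal)
    {t : ι} (hC : CondIndepRV μ (C t) (fun ω (s : {s : ι // s ≠ t}) => (A s ω, B s ω))
      (fun ω => (A t ω, B t ω, fun s : {s : ι // s < t} => C s ω)))
    (hpast : IndepRV μ (fun ω (s : Set.Iio t) => (A s ω, B s ω, C s ω))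
      (fun ω (s : Set.Ici t) => (A s ω, B s ω))) :
    IndepRV μ (fun ω (s : Set.Iic t) => (A s ω, B s ω, C s ω))
      (fun ω (s : Set.Ioi t) => (A s ω, B s ω)) := by
  have hZ : ∀ z, MeasurableSet {ω | (fun s : Set.Ioi t => (A s ω, B s ω)) = z} :=
    measurableSet_fiber_pi fun s _ => measurableSet_fiber_prod (hAm s _) (hBm s _)
  have hPQ := hpast.comp
    (f := fun x => (fun s : Set.Iio t => ((x s).1, (x s).2.1), fun s : Set.Iio t => (x s).2.2))
    (g := fun y => (y ⟨t, Set.self_mem_Ici⟩,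
      fun s : Set.Ioi t => y ⟨s, Set.Ioi_subset_Ici_self s.2⟩))
    (by
      intro x x' hx
      simp only [Prod.mk.injEq, funext_iff] at hx
      exact funext fun s => Prod.ext (hx.1 s).1 (Prod.ext (hx.1 s).2 (hx.2 s)))
    (by
      intro y y' hy
      simp only [Prod.mk.injEq, funext_iff] at hy
      funext ⟨s, hs⟩
      rcases (Set.mem_Ici.1 hs).eq_or_lt with rfl | hlt
      · exact hy.1
      · exact hy.2 ⟨s, hlt⟩)
  have hYZ := (indepRV_restrict_of_disjoint (fun s ω => (A s ω, B s ω)) hAB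
      (Set.disjoint_singleton_left.2 Set.self_notMem_Ioi)).comp
    (f := fun y => y ⟨t, rfl⟩) (g := id)
    (by
      intro y y' hy
      funext ⟨s, hs⟩
      obtain rfl : s = t := hs
      exact hy)
    Function.injective_id
  have hCI := hC.comp (f := id)
    (g := fun v => (fun s : Set.Iio t => v ⟨s, ne_of_lt s.2⟩,
      fun s : Set.Ioi t => v ⟨s, ne_of_gt s.2⟩))
    (k := fun w => ((w.1, w.2.1), w.2.2))
    Function.injective_id
    (by
      intro v v' hv
      simp only [Prod.mk.injEq, funext_iff] at hv
      funext ⟨s, hs⟩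
      rcases lt_or_gt_of_ne hs with hlt | hlt
      · exact hv.1 ⟨s, hlt⟩
      · exact hv.2 ⟨s, hlt⟩)
    (by
      rintro ⟨a, b, c⟩ ⟨a', b', c'⟩ hw
      simp only [Prod.mk.injEq] at hw ⊢
      exact ⟨hw.1.1, hw.1.2, hw.2⟩)
  refine (IndepRV.of_condIndepRV hZ hPQ hYZ hCI).of_comp
    (f := fun x =>
      ((fun s : Set.Iio t => ((x ⟨s, Set.Iio_subset_Iic_self s.2⟩).1,
          (x ⟨s, Set.Iio_subset_Iic_self s.2⟩).2.1),
        fun s : Set.Iio t => (x ⟨s, Set.Iio_subset_Iic_self s.2⟩).2.2),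
      ((x ⟨t, Set.self_mem_Iic⟩).1, (x ⟨t, Set.self_mem_Iic⟩).2.1),
      (x ⟨t, Set.self_mem_Iic⟩).2.2))
    (g := id) ?_ Function.injective_id
  intro x x' hx
  simp only [Prod.mk.injEq, funext_iff] at hx
  funext ⟨s, hs⟩
  rcases (Set.mem_Iic.1 hs).eq_or_lt with rfl | hlt
  · exact Prod.ext hx.2.1.1 (Prod.ext hx.2.1.2 hx.2.2)
  · exact Prod.ext (hx.1.1 ⟨s, hlt⟩).1 (Prod.ext (hx.1.1 ⟨s, hlt⟩).2 (hx.1.2 ⟨s, hlt⟩))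

end Chain

variable {Ω : Type*} [MeasurableSpace Ω] {n : ℕ}
  {𝔄 𝔅 ℭ 𝔇 : Fin n → Type*}
  [∀ t, Fintype (𝔄 t)] [∀ t, Fintype (𝔅 t)] [∀ t, Fintype (ℭ t)] [∀ t, Fintype (𝔇 t)]

theorem stmt10_general (μ : Measure Ω) [IsProbabilityMeasure μ]
    (A : ∀ t, Ω → 𝔄 t) (B : ∀ t, Ω → 𝔅 t) (C : ∀ t, Ω → ℭ t)
    (hAm : ∀ t a, MeasurableSet {ω | A t ω = a})
    (hBm : ∀ t b, MeasurableSet {ω | B t ω = b})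
    (hi : ∀ (T : Finset (Fin n)) (ab : ∀ t, 𝔄 t × 𝔅 t),
      (μ {ω | ∀ t ∈ T, (A t ω, B t ω) = ab t}).toReal =
        ∏ t ∈ T, (μ {ω | (A t ω, B t ω) = ab t}).toReal)
    (hiii : ∀ t : Fin n, CondIndepRV μ (C t)
      (fun ω => fun s : {s : Fin n // s ≠ t} => (A s.1 ω, B s.1 ω))
      (fun ω => (A t ω, B t ω, fun s : {s : Fin n // s < t} => C s.1 ω))) :
    ∀ t : Fin n, IndepRV μ
      (fun ω => fun s : {s : Fin n // s ≤ t} => (A s.1 ω, B s.1 ω, C s.1 ω))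
      (fun ω => fun s : {s : Fin n // t < s.1} => (A s.1 ω, B s.1 ω)) := by
  suffices ∀ k (hk : k < n),
      IndepRV μ (fun ω (s : Set.Iic (⟨k, hk⟩ : Fin n)) => (A s ω, B s ω, C s ω))
        (fun ω (s : Set.Ioi (⟨k, hk⟩ : Fin n)) => (A s ω, B s ω)) from
    fun t => this t t.2
  intro k
  induction k with
  | zero =>
    intro hk
    refine indepRV_Iic_Ioi_of_indepRV_Iio_Ici hAm hBm hi (hiii _) ?_
    have : IsEmpty (Set.Iio (⟨0, hk⟩ : Fin n)) := ⟨fun s => Nat.not_lt_zero _ s.2⟩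
    exact IndepRV.of_subsingleton
  | succ k ih =>
    intro hk
    refine indepRV_Iic_Ioi_of_indepRV_Iio_Ici hAm hBm hi (hiii _) ?_
    have hIic : Set.Iic (⟨k, by omega⟩ : Fin n) = Set.Iio ⟨k + 1, hk⟩ := by
      ext s; simp only [Set.mem_Iic, Set.mem_Iio, Fin.le_def, Fin.lt_def]; omega
    have hIoi : Set.Ioi (⟨k, by omega⟩ : Fin n) = Set.Ici ⟨k + 1, hk⟩ := by
      ext s; simp only [Set.mem_Ioi, Set.mem_Ici, Fin.le_def, Fin.lt_def]; omega
    rw [← hIic, ← hIoi]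
    exact ih (by omega)

/-- under (i) mutual independence of the pairs `(A_t, B_t)`,
(ii) `B^n — (A^n, C^n) — D^n`, and (iii) `C_t — (A_t, B_t, C^{t-1}) — (A^{n∖t}, B^{n∖t})`,
the vector `(A^t, B^t, C^t)` is independent of `(A_{t+1}^n, B_{t+1}^n)` for each `t`. -/
theorem stmt10 (μ : Measure Ω) [IsProbabilityMeasure μ]
    (A : ∀ t, Ω → 𝔄 t) (B : ∀ t, Ω → 𝔅 t) (C : ∀ t, Ω → ℭ t) (D : ∀ t, Ω → 𝔇 t)
    (hAm : ∀ t a, MeasurableSet {ω | A t ω = a})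
    (hBm : ∀ t b, MeasurableSet {ω | B t ω = b})
    (hCm : ∀ t c, MeasurableSet {ω | C t ω = c})
    (hDm : ∀ t d, MeasurableSet {ω | D t ω = d})
    (hi : ∀ (T : Finset (Fin n)) (ab : ∀ t, 𝔄 t × 𝔅 t),
      (μ {ω | ∀ t ∈ T, (A t ω, B t ω) = ab t}).toReal =
        ∏ t ∈ T, (μ {ω | (A t ω, B t ω) = ab t}).toReal)
    (hii : CondIndepRV μ (fun ω (t : Fin n) => B t ω) (fun ω (t : Fin n) => D t ω)
      (fun ω => ((fun t => A t ω), (fun t => C t ω))))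
    (hiii : ∀ t : Fin n, CondIndepRV μ (C t)
      (fun ω => fun s : {s : Fin n // s ≠ t} => (A s.1 ω, B s.1 ω))
      (fun ω => (A t ω, B t ω, fun s : {s : Fin n // s < t} => C s.1 ω))) :
    ∀ t : Fin n, IndepRV μ
      (fun ω => fun s : {s : Fin n // s ≤ t} => (A s.1 ω, B s.1 ω, C s.1 ω))
      (fun ω => fun s : {s : Fin n // t < s.1} => (A s.1 ω, B s.1 ω)) :=
  stmt10_general μ A B C hAm hBm hi hiii
end
end

section
/- Under hypotheses (i)–(iii), for every t = 1, …, n the pair (A_t, B_t) is conditionally independent of the random vector (A^{n∖t}, B^{n∖t}, C_{t+1}^n) given C^t. -/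
/-!
Write `X_s = (A_s, B_s)`. Applying (iii) along the chain rule for `C^n`, and then (i), gives
  `μ(X^n = x, C^n = c) · ∏_s μ(X_s = x_s, C^{s-1} = c^{s-1})`
    `= ∏_s μ(X_s = x_s) · μ(X_s = x_s, C^s = c^s)`,
where the `s`-th factors only depend on `x_s` and `c^s`. Once `C^t = w` is fixed, the factors at
`s = t` only depend on the value `u` of `X_t`, and all the others only on the value `v` of
`(X^{n∖t}, C_{t+1}^n)`. Hence the joint probabilities `J(u, v)` of the two satisfy
`J(u₁, v₁) J(u₂, v₂) = J(u₁, v₂) J(u₂, v₁)`, which is conditional independence given `C^t = w`.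
-/

open MeasureTheory

noncomputable section

theorem mul_prod_eq_mul_prod_of_succ {M : Type*} [CommMonoid M] {n : ℕ} {f : ℕ → M}
    {g h : Fin n → M} (hstep : ∀ s : Fin n, f (s + 1) * g s = h s * f s) :
    f n * ∏ s, g s = f 0 * ∏ s, h s := by
  induction n with
  | zero => simp
  | succ n ih =>
    have hlast := hstep (Fin.last n)
    rw [Fin.val_last] at hlast
    rw [Fin.prod_univ_castSucc, Fin.prod_univ_castSucc, ← mul_assoc, mul_right_comm, hlast,
      mul_assoc, ih fun s => hstep s.castSucc]
    ac_rfl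

theorem mul_eq_mul_of_mul_prod_eq_prod {K ι : Type*} [Fintype ι] {J : K → ℝ}
    {D N : K → ι → ℝ} (hJ : ∀ k, J k * ∏ i, D k i = ∏ i, N k i) (hJ_nonneg : ∀ k, 0 ≤ J k)
    (hJD : ∀ k i, J k ≤ D k i) {k₁ k₂ l₁ l₂ : K}
    (hD : ∀ i, D l₁ i * D l₂ i = D k₁ i * D k₂ i)
    (hN : ∀ i, N l₁ i * N l₂ i = N k₁ i * N k₂ i) :
    J k₁ * J k₂ = J l₁ * J l₂ := by
  have hJ_zero : ∀ k i, D k i = 0 → J k = 0 := fun k i h =>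
    le_antisymm (h ▸ hJD k i) (hJ_nonneg k)
  by_cases hzero : ∃ i, D k₁ i * D k₂ i = 0
  · obtain ⟨i, hi⟩ := hzero
    have hl : D l₁ i * D l₂ i = 0 := (hD i).trans hi
    rcases mul_eq_zero.mp hi with h | h <;> rcases mul_eq_zero.mp hl with h' | h' <;>
      simp [hJ_zero _ _ h, hJ_zero _ _ h']
  · push Not at hzero
    apply mul_right_cancel₀ (Finset.prod_ne_zero_iff.mpr fun i _ => hzero i)
    calc J k₁ * J k₂ * ∏ i, D k₁ i * D k₂ i
        = ∏ i, N k₁ i * N k₂ i := by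
          rw [Finset.prod_mul_distrib, Finset.prod_mul_distrib, ← hJ, ← hJ]; ring
      _ = J l₁ * J l₂ * ∏ i, D l₁ i * D l₂ i := by
          simp only [← hN, Finset.prod_mul_distrib, ← hJ]; ring
      _ = J l₁ * J l₂ * ∏ i, D k₁ i * D k₂ i := by simp only [hD]

theorem mul_sum_sum_eq_sum_mul_sum_of_cross {R α β : Type*} [CommSemiring R]
    [Fintype α] [Fintype β] {J : α → β → R}
    (h : ∀ u₁ u₂ v₁ v₂, J u₁ v₁ * J u₂ v₂ = J u₁ v₂ * J u₂ v₁) (u : α) (v : β) :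
    J u v * ∑ u', ∑ v', J u' v' = (∑ v', J u v') * ∑ u', J u' v := by
  simp only [Finset.mul_sum, Finset.sum_mul, h u _ v]

section FiniteValued

variable {Ω α β γ δ : Type*} [MeasurableSpace Ω] {μ : Measure Ω}
  {U : Ω → α} {V : Ω → β} {W : Ω → γ}

theorem condIndepRV_of_measureReal_mul_eq
    (h : ∀ u v w, μ.real {ω | U ω = u ∧ V ω = v ∧ W ω = w} * μ.real {ω | W ω = w} =
      μ.real {ω | U ω = u ∧ W ω = w} * μ.real {ω | V ω = v ∧ W ω = w}) :
    CondIndepRV μ U V W := by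
  intro u v w hw
  simp only [← measureReal_def] at hw ⊢
  field_simp
  exact h u v w

theorem CondIndepRV.measureReal_mul_eq [IsFiniteMeasure μ] (h : CondIndepRV μ U V W)
    (u : α) (v : β) (w : γ) :
    μ.real {ω | U ω = u ∧ V ω = v ∧ W ω = w} * μ.real {ω | W ω = w} =
      μ.real {ω | U ω = u ∧ W ω = w} * μ.real {ω | V ω = v ∧ W ω = w} := by
  rcases (measureReal_nonneg (s := {ω | W ω = w})).eq_or_lt with hw | hw
  · have hUW : μ.real {ω | U ω = u ∧ W ω = w} = 0 :=
      le_antisymm (hw ▸ measureReal_mono fun ω hω => hω.2) measureReal_nonneg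
    rw [← hw, hUW, mul_zero, zero_mul]
  · have := h u v w hw
    simp only [← measureReal_def] at this
    field_simp at this
    exact this

theorem CondIndepRV.comp_right {e : γ → δ} (he : Function.Injective e)
    (h : CondIndepRV μ U V W) : CondIndepRV μ U V (e ∘ W) := by
  intro u v w' hw'
  obtain ⟨ω₀, rfl⟩ : ∃ ω₀, e (W ω₀) = w' := by
    by_contra! hne
    simp [hne] at hw'
  simp only [Function.comp_apply, he.eq_iff] at hw' ⊢
  exact h u v _ hw'

theorem measureReal_eq_sum_measureReal_and [IsFiniteMeasure μ] [Fintype β]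
    (P : Ω → Prop) (f : Ω → β) (h : ∀ b, MeasurableSet {ω | f ω = b ∧ P ω}) :
    μ.real {ω | P ω} = ∑ b, μ.real {ω | f ω = b ∧ P ω} := by
  rw [← measureReal_iUnion_fintype _ h]
  · congr 1
    ext ω
    simp
  · intro b b' hne
    exact Set.disjoint_left.mpr fun ω hb hb' => hne (hb.1.symm.trans hb'.1)

theorem condIndepRV_of_mul_eq_mul [IsFiniteMeasure μ] [Fintype α] [Fintype β]
    (hm : ∀ u v w, MeasurableSet {ω | U ω = u ∧ V ω = v ∧ W ω = w})
    (hcross : ∀ w u₁ u₂ v₁ v₂,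
      μ.real {ω | U ω = u₁ ∧ V ω = v₁ ∧ W ω = w} *
          μ.real {ω | U ω = u₂ ∧ V ω = v₂ ∧ W ω = w} =
        μ.real {ω | U ω = u₁ ∧ V ω = v₂ ∧ W ω = w} *
          μ.real {ω | U ω = u₂ ∧ V ω = v₁ ∧ W ω = w}) :
    CondIndepRV μ U V W := by
  have hswap : ∀ u v w, {ω | V ω = v ∧ U ω = u ∧ W ω = w} =
      {ω | U ω = u ∧ V ω = v ∧ W ω = w} := fun _ _ _ => Set.ext fun _ => and_left_comm
  have hUW : ∀ u w, μ.real {ω | U ω = u ∧ W ω = w} =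
      ∑ v, μ.real {ω | U ω = u ∧ V ω = v ∧ W ω = w} := fun u w => by
    simp only [measureReal_eq_sum_measureReal_and _ V fun v => hswap u v w ▸ hm u v w, hswap]
  have hUWm : ∀ u w, MeasurableSet {ω | U ω = u ∧ W ω = w} := fun u w => by
    convert MeasurableSet.iUnion fun v => hm u v w using 1
    ext ω
    simp
  apply condIndepRV_of_measureReal_mul_eq
  intro u v w
  rw [measureReal_eq_sum_measureReal_and _ U (hUWm · w), hUW,
    measureReal_eq_sum_measureReal_and _ U (hm · v w)]
  simp only [hUW]
  exact mul_sum_sum_eq_sum_mul_sum_of_cross (hcross w) u v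

end FiniteValued

section SplitAtEquiv

variable {ι : Type*} [LinearOrder ι] {𝔛 ℭ : ι → Type*}

def LocalEq (s : ι) (k k' : (∀ s, 𝔛 s) × ∀ s, ℭ s) : Prop :=
  k.1 s = k'.1 s ∧ ∀ j ≤ s, k.2 j = k'.2 j

variable (𝔛 ℭ) (t : ι)

def splitAtEquiv : ((∀ s, 𝔛 s) × ∀ s, ℭ s) ≃
    𝔛 t × ((∀ s : {s // s ≠ t}, 𝔛 s) × ∀ s : {s // t < s}, ℭ s) ×
      ∀ s : {s // s ≤ t}, ℭ s where
  toFun k := (k.1 t, (fun s => k.1 s, fun s => k.2 s), fun s => k.2 s)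
  invFun p := ((Equiv.piSplitAt t 𝔛).symm (p.1, p.2.1.1),
    fun s => if h : s ≤ t then p.2.2 ⟨s, h⟩ else p.2.1.2 ⟨s, lt_of_not_ge h⟩)
  left_inv k := by
    ext s
    · by_cases h : s = t
      · subst h; simp [Equiv.piSplitAt]
      · simp [Equiv.piSplitAt, h]
    · by_cases h : s ≤ t <;> simp [h]
  right_inv p := by
    ext s
    · simp [Equiv.piSplitAt]
    · simp [Equiv.piSplitAt, s.2]
    · simp [not_le.mpr s.2]
    · simp [s.2]

variable {𝔛 ℭ t}

theorem splitAtEquiv_symm_fst_self (p) : ((splitAtEquiv 𝔛 ℭ t).symm p).1 t = p.1 :=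
  congrArg Prod.fst ((splitAtEquiv 𝔛 ℭ t).apply_symm_apply p)

theorem splitAtEquiv_symm_fst_of_ne (p) {s : ι} (h : s ≠ t) :
    ((splitAtEquiv 𝔛 ℭ t).symm p).1 s = p.2.1.1 ⟨s, h⟩ :=
  congrFun (congrArg (·.2.1.1) ((splitAtEquiv 𝔛 ℭ t).apply_symm_apply p)) ⟨s, h⟩

theorem splitAtEquiv_symm_snd_of_le (p) {s : ι} (h : s ≤ t) :
    ((splitAtEquiv 𝔛 ℭ t).symm p).2 s = p.2.2 ⟨s, h⟩ :=
  congrFun (congrArg (·.2.2) ((splitAtEquiv 𝔛 ℭ t).apply_symm_apply p)) ⟨s, h⟩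

theorem splitAtEquiv_symm_snd_of_lt (p) {s : ι} (h : t < s) :
    ((splitAtEquiv 𝔛 ℭ t).symm p).2 s = p.2.1.2 ⟨s, h⟩ :=
  congrFun (congrArg (·.2.1.2) ((splitAtEquiv 𝔛 ℭ t).apply_symm_apply p)) ⟨s, h⟩

theorem localEq_splitAtEquiv_symm_self (u v v' w) :
    LocalEq t ((splitAtEquiv 𝔛 ℭ t).symm (u, v, w))
      ((splitAtEquiv 𝔛 ℭ t).symm (u, v', w)) :=
  ⟨by rw [splitAtEquiv_symm_fst_self, splitAtEquiv_symm_fst_self],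
    fun j hj => by rw [splitAtEquiv_symm_snd_of_le _ hj, splitAtEquiv_symm_snd_of_le _ hj]⟩

theorem localEq_splitAtEquiv_symm_of_ne {s : ι} (hs : s ≠ t) (u u' v w) :
    LocalEq s ((splitAtEquiv 𝔛 ℭ t).symm (u, v, w))
      ((splitAtEquiv 𝔛 ℭ t).symm (u', v, w)) := by
  refine ⟨by rw [splitAtEquiv_symm_fst_of_ne _ hs, splitAtEquiv_symm_fst_of_ne _ hs],
    fun j _ => ?_⟩
  rcases le_or_gt j t with hj | hj
  · rw [splitAtEquiv_symm_snd_of_le _ hj, splitAtEquiv_symm_snd_of_le _ hj]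
  · rw [splitAtEquiv_symm_snd_of_lt _ hj, splitAtEquiv_symm_snd_of_lt _ hj]

end SplitAtEquiv

section Chain

variable {Ω : Type*} {n : ℕ} {𝔛 ℭ : Fin n → Type*}
  (X : ∀ s, Ω → 𝔛 s) (C : ∀ s, Ω → ℭ s)

def prefixEvent (k : (∀ s, 𝔛 s) × ∀ s, ℭ s) (m : ℕ) : Set Ω :=
  {ω | (∀ s, X s ω = k.1 s) ∧ ∀ s : Fin n, (s : ℕ) < m → C s ω = k.2 s}

/- Indices are 0-based: in the 1-based notation of the header, `localEvent X C k s s` and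
`localEvent X C k s (s + 1)` are the events `X_s = x_s, C^{s-1} = c^{s-1}` and
`X_s = x_s, C^s = c^s`. -/
def localEvent (k : (∀ s, 𝔛 s) × ∀ s, ℭ s) (s : Fin n) (m : ℕ) : Set Ω :=
  {ω | X s ω = k.1 s ∧ ∀ j : Fin n, (j : ℕ) < m → C j ω = k.2 j}

variable {X C}

theorem prefixEvent_full_eq (k : (∀ s, 𝔛 s) × ∀ s, ℭ s) :
    prefixEvent X C k n = {ω | (fun s => X s ω, fun s => C s ω) = k} := by
  ext ω
  simp [prefixEvent, Prod.ext_iff, funext_iff]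

theorem prefixEvent_subset_localEvent {k : (∀ s, 𝔛 s) × ∀ s, ℭ s} {m m' : ℕ}
    (h : m' ≤ m) (s : Fin n) : prefixEvent X C k m ⊆ localEvent X C k s m' :=
  fun _ hω => ⟨hω.1 s, fun j hj => hω.2 j (hj.trans_le h)⟩

theorem LocalEq.localEvent_eq {k k' : (∀ s, 𝔛 s) × ∀ s, ℭ s} {s : Fin n} {m : ℕ}
    (h : LocalEq s k k') (hm : m ≤ s + 1) : localEvent X C k s m = localEvent X C k' s m := by
  have hc : ∀ j : Fin n, (j : ℕ) < m → k.2 j = k'.2 j := fun j hj =>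
    h.2 j (Fin.le_def.mpr (by omega))
  ext ω
  simp +contextual only [localEvent, Set.mem_ofPred_eq, h.1, hc]

variable [MeasurableSpace Ω] {μ : Measure Ω}

theorem measurableSet_prefixEvent (hX : ∀ s x, MeasurableSet {ω | X s ω = x})
    (hC : ∀ s c, MeasurableSet {ω | C s ω = c}) (k : (∀ s, 𝔛 s) × ∀ s, ℭ s) (m : ℕ) :
    MeasurableSet (prefixEvent X C k m) := by
  simp only [prefixEvent, Set.ofPred_and, Set.ofPred_forall]
  exact (MeasurableSet.iInter fun s => hX s _).inter
    (MeasurableSet.iInter fun s => MeasurableSet.iInter fun _ => hC s _)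

theorem measureReal_prefixEvent_succ_mul [IsFiniteMeasure μ] {t : Fin n}
    (h : CondIndepRV μ (C t) (fun ω (s : {s // s ≠ t}) => X s ω)
      (fun ω => (X t ω, fun s : {s // s < t} => C s ω)))
    (k : (∀ s, 𝔛 s) × ∀ s, ℭ s) :
    μ.real (prefixEvent X C k (t + 1)) * μ.real (localEvent X C k t t) =
      μ.real (localEvent X C k t (t + 1)) * μ.real (prefixEvent X C k t) := by
  convert CondIndepRV.measureReal_mul_eq h (k.2 t) (fun s => k.1 s) (k.1 t, fun s => k.2 s)
    using 3 <;> ext ω <;>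
    simp only [prefixEvent, localEvent, Set.mem_ofPred_eq, Prod.mk.injEq, funext_iff,
      Subtype.forall, Fin.lt_def] <;> grind [Fin.ext_iff]

theorem measureReal_prefixEvent_mul_prod [IsFiniteMeasure μ]
    (hindep : ∀ x : ∀ s, 𝔛 s,
      μ.real {ω | ∀ s, X s ω = x s} = ∏ s, μ.real {ω | X s ω = x s})
    (hchain : ∀ t : Fin n, CondIndepRV μ (C t) (fun ω (s : {s // s ≠ t}) => X s ω)
      (fun ω => (X t ω, fun s : {s // s < t} => C s ω)))
    (k : (∀ s, 𝔛 s) × ∀ s, ℭ s) :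
    μ.real (prefixEvent X C k n) * ∏ s, μ.real (localEvent X C k s s) =
      ∏ s, μ.real {ω | X s ω = k.1 s} * μ.real (localEvent X C k s (s + 1)) := by
  rw [mul_prod_eq_mul_prod_of_succ (f := fun m => μ.real (prefixEvent X C k m))
    fun t => measureReal_prefixEvent_succ_mul (hchain t) k, Finset.prod_mul_distrib, ← hindep]
  simp [prefixEvent]

theorem measureReal_prefixEvent_mul_eq_swap [IsFiniteMeasure μ]
    (hindep : ∀ x : ∀ s, 𝔛 s,
      μ.real {ω | ∀ s, X s ω = x s} = ∏ s, μ.real {ω | X s ω = x s})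
    (hchain : ∀ t : Fin n, CondIndepRV μ (C t) (fun ω (s : {s // s ≠ t}) => X s ω)
      (fun ω => (X t ω, fun s : {s // s < t} => C s ω)))
    (t : Fin n) (u₁ u₂ v₁ v₂ w) :
    μ.real (prefixEvent X C ((splitAtEquiv 𝔛 ℭ t).symm (u₁, v₁, w)) n) *
        μ.real (prefixEvent X C ((splitAtEquiv 𝔛 ℭ t).symm (u₂, v₂, w)) n) =
      μ.real (prefixEvent X C ((splitAtEquiv 𝔛 ℭ t).symm (u₁, v₂, w)) n) *
        μ.real (prefixEvent X C ((splitAtEquiv 𝔛 ℭ t).symm (u₂, v₁, w)) n) := by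
  set e := splitAtEquiv 𝔛 ℭ t
  have hfactor : ∀ {s k k'}, LocalEq s k k' →
      μ.real (localEvent X C k s s) = μ.real (localEvent X C k' s s) ∧
        μ.real {ω | X s ω = k.1 s} * μ.real (localEvent X C k s (s + 1)) =
          μ.real {ω | X s ω = k'.1 s} * μ.real (localEvent X C k' s (s + 1)) := fun h =>
    ⟨by rw [h.localEvent_eq (Nat.le_succ _)], by rw [h.1, h.localEvent_eq le_rfl]⟩
  have hswap : ∀ s,
      LocalEq s (e.symm (u₁, v₂, w)) (e.symm (u₁, v₁, w)) ∧
        LocalEq s (e.symm (u₂, v₁, w)) (e.symm (u₂, v₂, w)) ∨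
      LocalEq s (e.symm (u₁, v₂, w)) (e.symm (u₂, v₂, w)) ∧
        LocalEq s (e.symm (u₂, v₁, w)) (e.symm (u₁, v₁, w)) := by
    intro s
    rcases eq_or_ne s t with rfl | hs
    · exact .inl ⟨localEq_splitAtEquiv_symm_self .., localEq_splitAtEquiv_symm_self ..⟩
    · exact .inr ⟨localEq_splitAtEquiv_symm_of_ne hs .., localEq_splitAtEquiv_symm_of_ne hs ..⟩
  refine mul_eq_mul_of_mul_prod_eq_prod (measureReal_prefixEvent_mul_prod hindep hchain)
    (fun _ => measureReal_nonneg)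
    (fun k s => measureReal_mono (prefixEvent_subset_localEvent s.isLt.le s)) ?_ ?_
  · intro s
    rcases hswap s with ⟨h₁, h₂⟩ | ⟨h₁, h₂⟩
    · rw [(hfactor h₁).1, (hfactor h₂).1]
    · rw [(hfactor h₁).1, (hfactor h₂).1, mul_comm]
  · intro s
    rcases hswap s with ⟨h₁, h₂⟩ | ⟨h₁, h₂⟩
    · rw [(hfactor h₁).2, (hfactor h₂).2]
    · rw [(hfactor h₁).2, (hfactor h₂).2, mul_comm]

theorem condIndepRV_of_chain [IsFiniteMeasure μ] [∀ s, Fintype (𝔛 s)] [∀ s, Fintype (ℭ s)]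
    (hX : ∀ s x, MeasurableSet {ω | X s ω = x}) (hC : ∀ s c, MeasurableSet {ω | C s ω = c})
    (hindep : ∀ x : ∀ s, 𝔛 s,
      μ.real {ω | ∀ s, X s ω = x s} = ∏ s, μ.real {ω | X s ω = x s})
    (hchain : ∀ t : Fin n, CondIndepRV μ (C t) (fun ω (s : {s // s ≠ t}) => X s ω)
      (fun ω => (X t ω, fun s : {s // s < t} => C s ω)))
    (t : Fin n) :
    CondIndepRV μ (X t)
      (fun ω => ((fun s : {s // s ≠ t} => X s ω), fun s : {s // t < s} => C s ω))
      (fun ω (s : {s // s ≤ t}) => C s ω) := by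
  have hevent : ∀ u v w, {ω | X t ω = u ∧ ((fun s : {s // s ≠ t} => X s ω),
      fun s : {s // t < s} => C s ω) = v ∧ (fun s : {s // s ≤ t} => C s ω) = w} =
      prefixEvent X C ((splitAtEquiv 𝔛 ℭ t).symm (u, v, w)) n := by
    intro u v w
    rw [prefixEvent_full_eq]
    ext ω
    simp only [Set.mem_ofPred_eq, Equiv.eq_symm_apply, Prod.ext_iff]
    rfl
  refine condIndepRV_of_mul_eq_mul
    (fun u v w => hevent u v w ▸ measurableSet_prefixEvent hX hC _ _) fun w u₁ u₂ v₁ v₂ => ?_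
  simp only [hevent]
  exact measureReal_prefixEvent_mul_eq_swap hindep hchain t u₁ u₂ v₁ v₂ w

end Chain

variable {Ω : Type*} [MeasurableSpace Ω] {n : ℕ}
  {𝔄 𝔅 ℭ 𝔇 : Fin n → Type*}
  [∀ t, Fintype (𝔄 t)] [∀ t, Fintype (𝔅 t)] [∀ t, Fintype (ℭ t)] [∀ t, Fintype (𝔇 t)]

theorem stmt11_general (μ : Measure Ω) [IsProbabilityMeasure μ]
    (A : ∀ t, Ω → 𝔄 t) (B : ∀ t, Ω → 𝔅 t) (C : ∀ t, Ω → ℭ t)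
    (hAm : ∀ t a, MeasurableSet {ω | A t ω = a})
    (hBm : ∀ t b, MeasurableSet {ω | B t ω = b})
    (hCm : ∀ t c, MeasurableSet {ω | C t ω = c})
    (hi : ∀ (T : Finset (Fin n)) (ab : ∀ t, 𝔄 t × 𝔅 t),
      (μ {ω | ∀ t ∈ T, (A t ω, B t ω) = ab t}).toReal =
        ∏ t ∈ T, (μ {ω | (A t ω, B t ω) = ab t}).toReal)
    (hiii : ∀ t : Fin n, CondIndepRV μ (C t)
      (fun ω => fun s : {s : Fin n // s ≠ t} => (A s.1 ω, B s.1 ω))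
      (fun ω => (A t ω, B t ω, fun s : {s : Fin n // s < t} => C s.1 ω))) :
    ∀ t : Fin n, CondIndepRV μ
      (fun ω => (A t ω, B t ω))
      (fun ω => ((fun s : {s : Fin n // s ≠ t} => (A s.1 ω, B s.1 ω)),
        (fun s : {s : Fin n // t < s.1} => C s.1 ω)))
      (fun ω => fun s : {s : Fin n // s ≤ t} => C s.1 ω) :=
  condIndepRV_of_chain (X := fun s ω => (A s ω, B s ω))
    (fun s x => by
      simpa only [Prod.ext_iff, Set.ofPred_and] using (hAm s x.1).inter (hBm s x.2))
    hCm
    (fun x => by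
      simpa only [Finset.mem_univ, true_implies, ← measureReal_def] using hi Finset.univ x)
    (fun t => CondIndepRV.comp_right (Equiv.prodAssoc (𝔄 t) (𝔅 t) _).symm.injective (hiii t))

/-- under (i) mutual independence of the pairs `(A_t, B_t)`,
(ii) `B^n — (A^n, C^n) — D^n`, and (iii) `C_t — (A_t, B_t, C^{t-1}) — (A^{n∖t}, B^{n∖t})`,
the pair `(A_t, B_t)` is conditionally independent of `(A^{n∖t}, B^{n∖t}, C_{t+1}^n)`
given `C^t`, for each `t`. -/
theorem stmt11 (μ : Measure Ω) [IsProbabilityMeasure μ]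
    (A : ∀ t, Ω → 𝔄 t) (B : ∀ t, Ω → 𝔅 t) (C : ∀ t, Ω → ℭ t) (D : ∀ t, Ω → 𝔇 t)
    (hAm : ∀ t a, MeasurableSet {ω | A t ω = a})
    (hBm : ∀ t b, MeasurableSet {ω | B t ω = b})
    (hCm : ∀ t c, MeasurableSet {ω | C t ω = c})
    (hDm : ∀ t d, MeasurableSet {ω | D t ω = d})
    (hi : ∀ (T : Finset (Fin n)) (ab : ∀ t, 𝔄 t × 𝔅 t),
      (μ {ω | ∀ t ∈ T, (A t ω, B t ω) = ab t}).toReal =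
        ∏ t ∈ T, (μ {ω | (A t ω, B t ω) = ab t}).toReal)
    (hii : CondIndepRV μ (fun ω (t : Fin n) => B t ω) (fun ω (t : Fin n) => D t ω)
      (fun ω => ((fun t => A t ω), (fun t => C t ω))))
    (hiii : ∀ t : Fin n, CondIndepRV μ (C t)
      (fun ω => fun s : {s : Fin n // s ≠ t} => (A s.1 ω, B s.1 ω))
      (fun ω => (A t ω, B t ω, fun s : {s : Fin n // s < t} => C s.1 ω))) :
    ∀ t : Fin n, CondIndepRV μ
      (fun ω => (A t ω, B t ω))
      (fun ω => ((fun s : {s : Fin n // s ≠ t} => (A s.1 ω, B s.1 ω)),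
        (fun s : {s : Fin n // t < s.1} => C s.1 ω)))
      (fun ω => fun s : {s : Fin n // s ≤ t} => C s.1 ω) :=
  stmt11_general μ A B C hAm hBm hCm hi hiii
end
end
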